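/- arXiv:2405.18976 — 9 statements merged into one kernel-verified Lean document; each statement's English description precedes it below -/
import Mathlib

section
/- Let ‖·‖ be an arbitrary norm on ℝ^d. Let F : ℝ^d → ℝ be differentiable and τ-star-convex with global minimizer x⋆ and F⋆ = F(x⋆). Let ψ : ℝ^d → ℝ be differentiable, convex and (μ,q)-uniformly convex with respect to ‖·‖. Fix η_t > 0 and points x_t, x_t^md ∈ ℝ^d, and suppose x_{t+1} minimizes x ↦ η_t⟨∇F(x_t^md), x⟩ + D_ψ(x, x_t) over ℝ^d. Then (η_t/τ)(F(x_t^md) − F⋆) ≤ D_ψ(x⋆, x_t) − D_ψ(x⋆, x_{t+1}) + η_t⟨∇F(x_t^md), x_t^md − x_t⟩ + η_t⟨∇F(x_t^md), x_t − x_{t+1}⟩ − (μ/q)‖x_{t+1} − x_t‖^q. -/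
open scoped RealInnerProductSpace BigOperators

noncomputable section

/-- `ℝ^d` with the standard inner product. -/
abbrev Vec (d : ℕ) := EuclideanSpace ℝ (Fin d)

/-- `N` is a norm on `ℝ^d`. -/
structure IsNorm {d : ℕ} (N : Vec d → ℝ) : Prop where
  add_le : ∀ x y : Vec d, N (x + y) ≤ N x + N y
  smul_eq : ∀ (c : ℝ) (x : Vec d), N (c • x) = |c| * N x
  eq_zero_iff : ∀ x : Vec d, N x = 0 ↔ x = 0

/-- The dual norm `‖z‖_* = sup {⟨z,u⟩ : ‖u‖ ≤ 1}`. -/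
def dualNorm {d : ℕ} (N : Vec d → ℝ) (z : Vec d) : ℝ :=
  sSup ((fun u => ⟪z, u⟫) '' {u : Vec d | N u ≤ 1})

/-- The Bregman divergence `D_G(x,y) = G(x) − G(y) − ⟨∇G(y), x−y⟩`,
where `G'` is the gradient of `G`. -/
def breg {d : ℕ} (G : Vec d → ℝ) (G' : Vec d → Vec d) (x y : Vec d) : ℝ :=
  G x - G y - ⟪G' y, x - y⟫

/-- First-order optimality for the mirror-descent step. -/
lemma md_foc {d : ℕ} (ψ : Vec d → ℝ) (ψ' : Vec d → Vec d)
    (hψ' : ∀ x, HasGradientAt ψ (ψ' x) x) (g : Vec d) (ηt : ℝ)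
    (xt xnext : Vec d)
    (hmin : ∀ x : Vec d,
      ηt * ⟪g, xnext⟫ + breg ψ ψ' xnext xt ≤ ηt * ⟪g, x⟫ + breg ψ ψ' x xt) :
    ∀ v : Vec d, ηt * ⟪g, v⟫ + ⟪ψ' xnext, v⟫ - ⟪ψ' xt, v⟫ = 0 := by
  set h : Vec d → ℝ := fun x => ηt * ⟪g, x⟫ + breg ψ ψ' x xt with hh
  have hloc : IsLocalMin h xnext := by
    apply Filter.Eventually.of_forall
    intro x
    exact hmin x
  have hD : HasFDerivAt h
      (ηt • (innerSL ℝ g) + ((InnerProductSpace.toDual ℝ (Vec d)) (ψ' xnext)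
        - innerSL ℝ (ψ' xt))) xnext := by
    have h1 : HasFDerivAt (fun x : Vec d => ηt * ⟪g, x⟫) (ηt • (innerSL ℝ g)) xnext := by
      exact ((innerSL ℝ g).hasFDerivAt (x := xnext)).const_mul ηt
    have h2 : HasFDerivAt ψ ((InnerProductSpace.toDual ℝ (Vec d)) (ψ' xnext)) xnext :=
      (hψ' xnext).hasFDerivAt
    have h3 : HasFDerivAt (fun x : Vec d => ψ xt + ⟪ψ' xt, x - xt⟫)
        (innerSL ℝ (ψ' xt)) xnext := by
      have hfun : (fun x : Vec d => ψ xt + ⟪ψ' xt, x - xt⟫)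
          = fun x => ψ xt + (⟪ψ' xt, x⟫ - ⟪ψ' xt, xt⟫) := by
        funext x; rw [inner_sub_right]
      rw [hfun]
      exact (((innerSL ℝ (ψ' xt)).hasFDerivAt).sub_const _).const_add _
    have := h1.add (h2.sub h3)
    have hfe : h = (fun x : Vec d => ηt * ⟪g, x⟫) + (ψ - fun x => ψ xt + ⟪ψ' xt, x - xt⟫) := by
      funext x
      simp only [hh, breg, Pi.add_apply, Pi.sub_apply]
      ring
    rw [hfe]
    exact this
  have hzero := hloc.hasFDerivAt_eq_zero hD
  intro v
  have heq := congrArg (fun (L : Vec d →L[ℝ] ℝ) => L v) hzero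
  simp only [ContinuousLinearMap.add_apply, ContinuousLinearMap.sub_apply,
    ContinuousLinearMap.smul_apply, InnerProductSpace.toDual_apply_apply, innerSL_apply_apply,
    smul_eq_mul, ContinuousLinearMap.zero_apply] at heq
  linarith

/-- Mirror-descent step bound for a τ-star-convex objective `F` and a
(μ,q)-uniformly convex distance generating function `ψ`. -/
theorem stmt_3 {d : ℕ} (N : Vec d → ℝ) (hN : IsNorm N)
    (F ψ : Vec d → ℝ) (F' ψ' : Vec d → Vec d)
    (hF' : ∀ x, HasGradientAt F (F' x) x)
    (hψ' : ∀ x, HasGradientAt ψ (ψ' x) x)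
    (hψconv : ConvexOn ℝ Set.univ ψ)
    (τ μ q : ℝ) (hτ : 0 < τ) (hμ : 0 < μ) (hq : 2 ≤ q)
    (xstar : Vec d) (hminF : ∀ x, F xstar ≤ F x)
    (hstar : ∀ x : Vec d, τ * ⟪F' x, x - xstar⟫ ≥ F x - F xstar)
    (hunif : ∀ x y : Vec d, breg ψ ψ' x y ≥ μ / q * N (x - y) ^ q)
    (ηt : ℝ) (hη : 0 < ηt) (xt xmd xnext : Vec d)
    (hmin : ∀ x : Vec d,
      ηt * ⟪F' xmd, xnext⟫ + breg ψ ψ' xnext xt ≤ ηt * ⟪F' xmd, x⟫ + breg ψ ψ' x xt) :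
    ηt / τ * (F xmd - F xstar) ≤
      breg ψ ψ' xstar xt - breg ψ ψ' xstar xnext +
        ηt * ⟪F' xmd, xmd - xt⟫ + ηt * ⟪F' xmd, xt - xnext⟫ -
        μ / q * N (xnext - xt) ^ q := by
  set g := F' xmd with hg
  have foc := md_foc ψ ψ' hψ' g ηt xt xnext hmin (xstar - xnext)
  -- three point identity
  have three : breg ψ ψ' xstar xt - breg ψ ψ' xstar xnext - breg ψ ψ' xnext xt
      = ⟪ψ' xnext, xstar - xnext⟫ - ⟪ψ' xt, xstar - xnext⟫ := by
    simp only [breg]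
    have e1 : ⟪ψ' xt, xstar - xt⟫ = ⟪ψ' xt, xstar - xnext⟫ + ⟪ψ' xt, xnext - xt⟫ := by
      rw [← inner_add_right]; congr 1; abel
    rw [e1]; ring
  have key : ηt * ⟪g, xnext - xstar⟫
      ≤ breg ψ ψ' xstar xt - breg ψ ψ' xstar xnext - μ / q * N (xnext - xt) ^ q := by
    have h1 : ηt * ⟪g, xnext - xstar⟫
        = breg ψ ψ' xstar xt - breg ψ ψ' xstar xnext - breg ψ ψ' xnext xt := by
      rw [three]
      have : ⟪g, xnext - xstar⟫ = - ⟪g, xstar - xnext⟫ := by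
        rw [← inner_neg_right]; congr 1; abel
      rw [this]; linarith [foc]
    have h2 := hunif xnext xt
    linarith
  have hsplit : ⟪g, xmd - xstar⟫
      = ⟪g, xmd - xt⟫ + ⟪g, xt - xnext⟫ + ⟪g, xnext - xstar⟫ := by
    rw [← inner_add_right, ← inner_add_right]; congr 1; abel
  have hst := hstar xmd
  have hmono : ηt / τ * (F xmd - F xstar) ≤ ηt * ⟪g, xmd - xstar⟫ := by
    have h1 : F xmd - F xstar ≤ τ * ⟪g, xmd - xstar⟫ := hst
    have h2 : ηt / τ * (F xmd - F xstar) ≤ ηt / τ * (τ * ⟪g, xmd - xstar⟫) := by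
      apply mul_le_mul_of_nonneg_left h1 (by positivity)
    calc ηt / τ * (F xmd - F xstar) ≤ ηt / τ * (τ * ⟪g, xmd - xstar⟫) := h2
      _ = ηt * ⟪g, xmd - xstar⟫ := by field_simp
  rw [hsplit] at hmono
  linarith
end
end

section
/- Let ‖·‖ be an arbitrary norm on ℝ^d and let F : ℝ^d → ℝ be differentiable and (L,κ)-weakly smooth with respect to ‖·‖, with 1 < κ < q and q ≥ 2. Set q* := q/(q−1), r := (q−κ)/κ and M := (r/q)^r. Fix μ, α_t, η_t > 0 and x_t^md ∈ ℝ^d, and suppose x_{t+1}^{ag} minimizes x ↦ α_t⟨∇F(x_t^md), x⟩ + (μ/q)‖x − x_t^md‖^q over ℝ^d. Then for every pair u, v ∈ ℝ^d: η_t⟨∇F(x_t^md), u − v⟩ − (μ/q)‖v − u‖^q ≤ (η_t^{q*}/α_t^{q*−1})(F(x_t^md) − F(x_{t+1}^{ag})) + (η_t^{q*}/α_t^{q*−1−1/r}) · (M^{1/r}/μ^{1/r}) · L^{1+1/r}. -/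
open scoped RealInnerProductSpace BigOperators

noncomputable section

/-- Norms are nonneg. -/
lemma IsNorm.nonneg' {d : ℕ} {N : Vec d → ℝ} (hN : IsNorm N) (x : Vec d) : 0 ≤ N x := by
  have h0 : N 0 = 0 := (hN.eq_zero_iff 0).mpr rfl
  have hneg : N (-x) = N x := by
    have h := hN.smul_eq (-1) x
    simpa using h
  have h := hN.add_le x (-x)
  rw [add_neg_cancel, h0, hneg] at h
  linarith

/-- Tangent-line inequality for concave `rpow`. -/
lemma tangent_rpow {x lam θ : ℝ} (hx : 0 ≤ x) (hlam : 0 < lam) (hθ0 : 0 < θ) (hθ1 : θ < 1) :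
    x ^ θ ≤ θ * lam ^ (θ - 1) * x + (1 - θ) * lam ^ θ := by
  have key := Real.geom_mean_le_arith_mean2_weighted hθ0.le (by linarith) hx hlam.le
    (by ring : θ + (1 - θ) = 1)
  have hl : (0:ℝ) < lam ^ (θ - 1) := Real.rpow_pos_of_pos hlam _
  have h1 : x ^ θ = (x ^ θ * lam ^ (1 - θ)) * lam ^ (θ - 1) := by
    rw [mul_assoc, ← Real.rpow_add hlam]
    norm_num
  have hll : lam * lam ^ (θ - 1) = lam ^ θ := by
    rw [Real.rpow_sub hlam, Real.rpow_one]
    field_simp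
  calc x ^ θ = (x ^ θ * lam ^ (1 - θ)) * lam ^ (θ - 1) := h1
    _ ≤ (θ * x + (1 - θ) * lam) * lam ^ (θ - 1) := mul_le_mul_of_nonneg_right key hl.le
    _ = θ * lam ^ (θ - 1) * x + (1 - θ) * (lam * lam ^ (θ - 1)) := by ring
    _ = θ * lam ^ (θ - 1) * x + (1 - θ) * lam ^ θ := by rw [hll]

/-- One-variable maximization: `(L/κ)s^κ − (μ/(qα))s^q ≤ (r/q)L(Lα/μ)^(1/r)`. -/
lemma max_lemma {L κ q r μ αt : ℝ} (hL : 0 < L) (hκ1 : 1 < κ) (hκq : κ < q)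
    (hμ : 0 < μ) (hα : 0 < αt) (hr : r = (q - κ) / κ) {s : ℝ} (hs : 0 ≤ s) :
    L / κ * s ^ κ - μ / (q * αt) * s ^ q ≤ r / q * L * (L * αt / μ) ^ (1 / r) := by
  have hκ0 : (0:ℝ) < κ := by linarith
  have hq0 : (0:ℝ) < q := by linarith
  have hqκ : (0:ℝ) < q - κ := by linarith
  have hr0 : (0:ℝ) < r := by rw [hr]; positivity
  have hA : (0:ℝ) < L * αt / μ := by positivity
  set θ : ℝ := κ / q with hθdef
  set A : ℝ := L * αt / μ with hAdef
  set lam : ℝ := A ^ (q / (q - κ)) with hlamdef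
  have hlam : 0 < lam := Real.rpow_pos_of_pos hA _
  have hθ0 : 0 < θ := by positivity
  have hθ1 : θ < 1 := by rw [hθdef, div_lt_one hq0]; linarith
  have hsκ : s ^ κ = (s ^ q) ^ θ := by
    rw [← Real.rpow_mul hs]
    congr 1
    rw [hθdef]
    field_simp
  have ex1 : q / (q - κ) * (θ - 1) = -1 := by
    rw [hθdef]
    field_simp
    ring
  have e1 : lam ^ (θ - 1) = A⁻¹ := by
    rw [hlamdef, ← Real.rpow_mul hA.le, ex1]
    exact Real.rpow_neg_one A
  have ex2 : q / (q - κ) * θ = 1 / r := by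
    rw [hθdef, hr]
    field_simp
  have e2 : lam ^ θ = A ^ (1 / r) := by
    rw [hlamdef, ← Real.rpow_mul hA.le, ex2]
  have tang := tangent_rpow (Real.rpow_nonneg hs q) hlam hθ0 hθ1
  rw [e1, e2] at tang
  have hLκ : (0:ℝ) ≤ L / κ := by positivity
  have hmain := mul_le_mul_of_nonneg_left tang hLκ
  have c1 : L / κ * (θ * A⁻¹) = μ / (q * αt) := by
    rw [hθdef, hAdef]
    field_simp
  have c2 : L / κ * (1 - θ) = r / q * L := by
    rw [hθdef, hr]
    field_simp
  have expand : L / κ * (θ * A⁻¹ * s ^ q + (1 - θ) * A ^ (1 / r))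
      = (L / κ * (θ * A⁻¹)) * s ^ q + (L / κ * (1 - θ)) * A ^ (1 / r) := by ring
  rw [expand, c1, c2] at hmain
  rw [hsκ]
  linarith

/-- Proximal-step gap bound: for (L,κ)-weakly smooth `F` and the proximal point
`x_{t+1}^{ag}` minimizing `x ↦ α_t⟨∇F(x_t^md), x⟩ + (μ/q)‖x − x_t^md‖^q`,
for all `u, v`:
`η_t⟨∇F(x_t^md), u − v⟩ − (μ/q)‖v − u‖^q ≤ (η_t^{q*}/α_t^{q*−1})(F(x_t^md) − F(x_{t+1}^{ag}))
 + (η_t^{q*}/α_t^{q*−1−1/r}) (M^{1/r}/μ^{1/r}) L^{1+1/r}`. -/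
theorem stmt_4 {d : ℕ} (N : Vec d → ℝ) (hN : IsNorm N)
    (F : Vec d → ℝ) (F' : Vec d → Vec d)
    (hF' : ∀ x, HasGradientAt F (F' x) x)
    (L κ q : ℝ) (hL : 0 < L) (hκ1 : 1 < κ) (hκq : κ < q) (hq : 2 ≤ q)
    (hweak : ∀ x y : Vec d, |breg F F' x y| ≤ L / κ * N (x - y) ^ κ)
    (qstar r M : ℝ) (hqs : qstar = q / (q - 1)) (hr : r = (q - κ) / κ)
    (hM : M = (r / q) ^ r)
    (μ αt ηt : ℝ) (hμ : 0 < μ) (hα : 0 < αt) (hη : 0 < ηt)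
    (xmd xag : Vec d)
    (hag : ∀ x : Vec d,
      αt * ⟪F' xmd, xag⟫ + μ / q * N (xag - xmd) ^ q ≤
        αt * ⟪F' xmd, x⟫ + μ / q * N (x - xmd) ^ q) :
    ∀ u v : Vec d,
      ηt * ⟪F' xmd, u - v⟫ - μ / q * N (v - u) ^ q ≤
        ηt ^ qstar / αt ^ (qstar - 1) * (F xmd - F xag) +
          ηt ^ qstar / αt ^ (qstar - 1 - 1 / r) * (M ^ (1 / r) / μ ^ (1 / r)) *
            L ^ (1 + 1 / r) := by
  intro u v
  have hq0 : (0:ℝ) < q := by linarith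
  have hq1 : (0:ℝ) < q - 1 := by linarith
  have hκ0 : (0:ℝ) < κ := by linarith
  have hqκ : (0:ℝ) < q - κ := by linarith
  have hr0 : (0:ℝ) < r := by rw [hr]; positivity
  have hE : (0:ℝ) < ηt / αt := by positivity
  set c : ℝ := (αt / ηt) ^ (1 / (q - 1)) with hcdef
  clear_value c
  have hc : 0 < c := by rw [hcdef]; positivity
  have hcq1 : c ^ (q - 1) = αt / ηt := by
    rw [hcdef, ← Real.rpow_mul (by positivity : (0:ℝ) ≤ αt / ηt)]
    rw [show 1 / (q - 1) * (q - 1) = 1 by field_simp]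
    exact Real.rpow_one _
  have hcq : c ^ q = c * (αt / ηt) := by
    rw [show q = 1 + (q - 1) by ring, Real.rpow_add hc, Real.rpow_one, hcq1]
  -- plug the point xmd + c • (v - u) into the minimizer property
  have hsub := hag (xmd + c • (v - u))
  rw [add_sub_cancel_left] at hsub
  have hNsm : N (c • (v - u)) = c * N (v - u) := by
    rw [hN.smul_eq, abs_of_pos hc]
  rw [hNsm, Real.mul_rpow hc.le (hN.nonneg' _), inner_add_right,
    real_inner_smul_right] at hsub
  have hvu : (⟪F' xmd, v - u⟫ : ℝ) = -⟪F' xmd, u - v⟫ := by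
    rw [show (v - u : Vec d) = -(u - v) by abel, inner_neg_right]
  rw [hvu] at hsub
  -- weak smoothness at (xag, xmd)
  have hw := hweak xag xmd
  rw [breg] at hw
  -- replace all vector quantities by opaque real scalars
  obtain ⟨P, hP⟩ : ∃ x, (⟪F' xmd, u - v⟫ : ℝ) = x := ⟨_, rfl⟩
  obtain ⟨I, hI⟩ : ∃ x, (⟪F' xmd, xag - xmd⟫ : ℝ) = x := ⟨_, rfl⟩
  obtain ⟨Ga, hGa⟩ : ∃ x, (⟪F' xmd, xag⟫ : ℝ) = x := ⟨_, rfl⟩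
  obtain ⟨Gm, hGm⟩ : ∃ x, (⟪F' xmd, xmd⟫ : ℝ) = x := ⟨_, rfl⟩
  obtain ⟨s, hsdef⟩ : ∃ x, N (xag - xmd) = x := ⟨_, rfl⟩
  obtain ⟨n, hndef⟩ : ∃ x, N (v - u) = x := ⟨_, rfl⟩
  have hs0 : 0 ≤ s := hsdef ▸ hN.nonneg' _
  have hIsub : Ga - Gm = I := by rw [← hP] at *; rw [← hI, ← hGa, ← hGm, inner_sub_right]
  rw [hP, hGa, hGm, hsdef, hndef] at hsub
  rw [hI, hsdef] at hw
  rw [hP, hndef]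
  -- step 1 : from the minimizer property
  have step1 : c * αt * P ≤ μ / q * (c ^ q * n ^ q) - αt * I - μ / q * s ^ q := by
    have haux : αt * Ga - αt * Gm = αt * I := by rw [← hIsub]; ring
    linarith [hsub, haux]
  -- multiply by D = ηt^qstar / αt^qstar
  set D : ℝ := ηt ^ qstar / αt ^ qstar with hDdef
  clear_value D
  have hηq : (0:ℝ) < ηt ^ qstar := Real.rpow_pos_of_pos hη _
  have hαq : (0:ℝ) < αt ^ qstar := Real.rpow_pos_of_pos hα _
  have hD : 0 < D := by rw [hDdef]; positivity
  have hDE : D = (ηt / αt) ^ qstar := by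
    rw [hDdef, Real.div_rpow hη.le hα.le]
  have hcE : c = (ηt / αt) ^ (-(1 / (q - 1))) := by
    rw [hcdef, Real.rpow_neg hE.le, ← Real.inv_rpow hE.le, inv_div]
  have hqsum : qstar + -(1 / (q - 1)) = 1 := by
    rw [hqs]
    field_simp
    ring
  have hDc : D * c = ηt / αt := by
    rw [hDE, hcE, ← Real.rpow_add hE, hqsum]
    exact Real.rpow_one _
  have hDcq : D * c ^ q = 1 := by
    rw [hcq, show D * (c * (αt / ηt)) = (D * c) * (αt / ηt) by ring, hDc]
    field_simp
  have hDca : D * (c * αt) = ηt := by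
    rw [show D * (c * αt) = (D * c) * αt by ring, hDc]
    field_simp
  have step2 : ηt * P - μ / q * n ^ q ≤ D * αt * (-I) - D * (μ / q) * s ^ q := by
    have h2 := mul_le_mul_of_nonneg_left step1 hD.le
    have hl : D * (c * αt * P) = ηt * P := by
      rw [show D * (c * αt * P) = (D * (c * αt)) * P by ring, hDca]
    have hrr : D * (μ / q * (c ^ q * n ^ q)) = μ / q * n ^ q := by
      rw [show D * (μ / q * (c ^ q * n ^ q)) = (D * c ^ q) * (μ / q * n ^ q) by ring, hDcq]
      ring
    linarith [h2, hl, hrr]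
  have hIub : -I ≤ (F xmd - F xag) + L / κ * s ^ κ := by
    have := (abs_le.mp hw).2
    linarith [this]
  -- one-variable maximization
  have hmax := max_lemma hL hκ1 hκq hμ hα hr hs0
  set Cmax : ℝ := r / q * L * (L * αt / μ) ^ (1 / r) with hCdef
  clear_value Cmax
  have step3 : ηt * P - μ / q * n ^ q ≤ D * αt * (F xmd - F xag) + D * αt * Cmax := by
    have h1 : D * αt * (-I) ≤ D * αt * ((F xmd - F xag) + L / κ * s ^ κ) :=
      mul_le_mul_of_nonneg_left hIub (by positivity)
    have h2 : D * αt * (L / κ * s ^ κ - μ / (q * αt) * s ^ q) ≤ D * αt * Cmax :=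
      mul_le_mul_of_nonneg_left hmax (by positivity)
    have h3 : D * αt * (μ / (q * αt) * s ^ q) = D * (μ / q) * s ^ q := by
      field_simp
    linarith [step2, h1, h2, h3]
  -- final rewriting of the right-hand side
  have hE1 : ηt ^ qstar / αt ^ (qstar - 1) = D * αt := by
    rw [Real.rpow_sub hα, Real.rpow_one, hDdef]
    field_simp
  have hM1 : M ^ (1 / r) = r / q := by
    rw [hM, ← Real.rpow_mul (by positivity : (0:ℝ) ≤ r / q)]
    rw [show r * (1 / r) = 1 by field_simp]
    exact Real.rpow_one _
  have hL1 : L ^ (1 + 1 / r) = L * L ^ (1 / r) := by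
    rw [Real.rpow_add hL, Real.rpow_one]
  have hA1 : (L * αt / μ) ^ (1 / r) = L ^ (1 / r) * αt ^ (1 / r) / μ ^ (1 / r) := by
    rw [Real.div_rpow (by positivity) hμ.le, Real.mul_rpow hL.le hα.le]
  have hα1 : αt ^ (qstar - 1 - 1 / r) = αt ^ qstar / αt / αt ^ (1 / r) := by
    rw [Real.rpow_sub hα, Real.rpow_sub hα, Real.rpow_one]
  have hαr : (0:ℝ) < αt ^ (1 / r) := Real.rpow_pos_of_pos hα _
  have hμr : (0:ℝ) < μ ^ (1 / r) := Real.rpow_pos_of_pos hμ _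
  have hLr : (0:ℝ) < L ^ (1 / r) := Real.rpow_pos_of_pos hL _
  have hE2 : ηt ^ qstar / αt ^ (qstar - 1 - 1 / r) * (M ^ (1 / r) / μ ^ (1 / r)) *
      L ^ (1 + 1 / r) = D * αt * Cmax := by
    rw [hα1, hM1, hL1, hCdef, hA1, hDdef]
    field_simp
  rw [hE1, hE2]
  exact step3
end
end

section
/- Let ‖·‖ be an arbitrary norm on ℝ^d. Let F : ℝ^d → ℝ be differentiable, τ-star-convex with global minimizer x⋆ (F⋆ = F(x⋆)), and (L,κ)-weakly smooth with respect to ‖·‖, with 1 < κ < q. Let ψ be differentiable, convex and (μ,q)-uniformly convex with respect to ‖·‖ (q ≥ 2). Set q* := q/(q−1), r := (q−κ)/κ, M := (r/q)^r, and for fixed η_t, α_t > 0 put A_t := η_t^{q*}/α_t^{q*−1} and B_t := (η_t^{q*}/α_t^{q*−1−1/r}) M^{1/r} L^{1+1/r}/μ^{1/r}; assume A_t ≥ η_t/τ. Let x_t, x_t^{ag} ∈ ℝ^d, let λ_t ∈ [0,1] and x_t^md := λ_t x_t^{ag} + (1−λ_t) x_t satisfy the binary-search condition η_t⟨∇F(x_t^md),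 x_t^md − x_t⟩ + (A_t − η_t/τ)(F(x_t^md) − F(x_t^{ag})) ≤ η_t ε_t for some ε_t ≥ 0, let x_{t+1} minimize x ↦ η_t⟨∇F(x_t^md), x⟩ + D_ψ(x, x_t) over ℝ^d, and let x_{t+1}^{ag} minimize x ↦ α_t⟨∇F(x_t^md), x⟩ + (μ/q)‖x − x_t^md‖^q over ℝ^d. Then A_t(F(x_{t+1}^{ag}) − F⋆) ≤ D_ψ(x⋆, x_t) − D_ψ(x⋆, x_{t+1}) + η_t ε_t + (A_t − η_t/τ)(F(x_t^{ag}) − F⋆) + B_t. -/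
set_option maxHeartbeats 1000000


open scoped RealInnerProductSpace BigOperators

noncomputable section

/-- Young-type inequality via weighted AM-GM. -/
lemma young_aux {κ q s t : ℝ} (hκ : 0 < κ) (hκq : κ < q) (hs : 0 < s) (ht : 0 ≤ t) :
    t ^ κ ≤ κ/q * (s * t^q) + (q-κ)/q * s ^ (-(κ/(q-κ))) := by
  have hq0 : 0 < q := hκ.trans hκq
  have hne : q - κ ≠ 0 := by linarith
  have hqne : q ≠ 0 := hq0.ne'
  have h := Real.geom_mean_le_arith_mean2_weighted
    (w₁ := κ/q) (w₂ := (q-κ)/q) (p₁ := s * t^q) (p₂ := s ^ (-(κ/(q-κ))))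
    (by positivity) (div_nonneg (by linarith) hq0.le)
    (by positivity) (by positivity) (by field_simp; ring)
  have e1 : (s*t^q)^(κ/q) = s^(κ/q) * t^κ := by
    rw [Real.mul_rpow hs.le (Real.rpow_nonneg ht q), ← Real.rpow_mul ht]
    congr 2
    field_simp
  have e2 : (s ^ (-(κ/(q-κ))))^((q-κ)/q) = s ^ (-(κ/q)) := by
    rw [← Real.rpow_mul hs.le]
    congr 1
    field_simp
  have e3 : s^(κ/q) * s^(-(κ/q)) = 1 := by
    rw [← Real.rpow_add hs]; simp
  calc t ^ κ = (s*t^q)^(κ/q) * (s ^ (-(κ/(q-κ))))^((q-κ)/q) := by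
        rw [e1, e2]; linear_combination (-(t^κ)) * e3
    _ ≤ _ := h

/-- One-step potential inequality for the accelerated mirror descent
with binary search (general case `1 < κ < q`). -/
theorem stmt_5 {d : ℕ} (N : Vec d → ℝ) (hN : IsNorm N)
    (F ψ : Vec d → ℝ) (F' ψ' : Vec d → Vec d)
    (hF' : ∀ x, HasGradientAt F (F' x) x)
    (hψ' : ∀ x, HasGradientAt ψ (ψ' x) x)
    (hψconv : ConvexOn ℝ Set.univ ψ)
    (τ L κ q μ : ℝ) (hτ : 0 < τ) (hL : 0 < L) (hκ1 : 1 < κ) (hκ2 : κ ≤ 2)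
    (hκq : κ < q) (hq : 2 ≤ q) (hμ : 0 < μ)
    (xstar : Vec d) (hminF : ∀ x, F xstar ≤ F x)
    (hstar : ∀ x : Vec d, τ * ⟪F' x, x - xstar⟫ ≥ F x - F xstar)
    (hweak : ∀ x y : Vec d, |breg F F' x y| ≤ L / κ * N (x - y) ^ κ)
    (hunif : ∀ x y : Vec d, breg ψ ψ' x y ≥ μ / q * N (x - y) ^ q)
    (qstar r M : ℝ) (hqs : qstar = q / (q - 1)) (hr : r = (q - κ) / κ)
    (hM : M = (r / q) ^ r)
    (ηt αt At Bt εt : ℝ) (hη : 0 < ηt) (hα : 0 < αt) (hε : 0 ≤ εt)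
    (hAt : At = ηt ^ qstar / αt ^ (qstar - 1))
    (hBt : Bt = ηt ^ qstar / αt ^ (qstar - 1 - 1 / r) * M ^ (1 / r) *
      L ^ (1 + 1 / r) / μ ^ (1 / r))
    (hAτ : At ≥ ηt / τ)
    (xt xag xmd xnext xagnext : Vec d) (lam : ℝ) (hlam : lam ∈ Set.Icc (0 : ℝ) 1)
    (hxmd : xmd = lam • xag + (1 - lam) • xt)
    (hbin : ηt * ⟪F' xmd, xmd - xt⟫ + (At - ηt / τ) * (F xmd - F xag) ≤ ηt * εt)
    (hminmd : ∀ x : Vec d,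
      ηt * ⟪F' xmd, xnext⟫ + breg ψ ψ' xnext xt ≤ ηt * ⟪F' xmd, x⟫ + breg ψ ψ' x xt)
    (hminag : ∀ x : Vec d,
      αt * ⟪F' xmd, xagnext⟫ + μ / q * N (xagnext - xmd) ^ q ≤
        αt * ⟪F' xmd, x⟫ + μ / q * N (x - xmd) ^ q) :
    At * (F xagnext - F xstar) ≤
      breg ψ ψ' xstar xt - breg ψ ψ' xstar xnext + ηt * εt +
        (At - ηt / τ) * (F xag - F xstar) + Bt := by
  have hκ0 : (0:ℝ) < κ := by linarith
  have hq0 : (0:ℝ) < q := by linarith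
  have hq1 : (0:ℝ) < q - 1 := by linarith
  have hr0 : 0 < r := by rw [hr]; exact div_pos (by linarith) hκ0
  have hrinv : 1/r = κ/(q-κ) := by rw [hr, one_div_div]
  have hAt0 : 0 < At := by
    rw [hAt]
    exact div_pos (Real.rpow_pos_of_pos hη _) (Real.rpow_pos_of_pos hα _)
  -- norm nonnegativity
  have hN0 : N 0 = 0 := (hN.eq_zero_iff 0).mpr rfl
  have hNneg : ∀ x : Vec d, N (-x) = N x := by
    intro x
    have h := hN.smul_eq (-1) x
    simpa using h
  have hNnn : ∀ x : Vec d, 0 ≤ N x := by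
    intro x
    have h := hN.add_le x (-x)
    rw [add_neg_cancel, hN0, hNneg] at h
    linarith
  -- Step 1: first-order optimality of the mirror step
  have opt : ∀ v : Vec d, ηt * ⟪F' xmd, v⟫ + (⟪ψ' xnext, v⟫ - ⟪ψ' xt, v⟫) = 0 := by
    have hloc : IsLocalMin
        (fun x : Vec d => ηt * ⟪F' xmd, x⟫ + (ψ x - ψ xt - ⟪ψ' xt, x - xt⟫)) xnext :=
      Filter.Eventually.of_forall fun x => hminmd x
    have h1 : HasFDerivAt (fun x : Vec d => ⟪F' xmd, x⟫)
        (InnerProductSpace.toDual ℝ (Vec d) (F' xmd)) xnext := by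
      exact (InnerProductSpace.toDual ℝ (Vec d) (F' xmd)).hasFDerivAt
    have h4 : HasFDerivAt (fun x : Vec d => ⟪ψ' xt, x⟫)
        (InnerProductSpace.toDual ℝ (Vec d) (ψ' xt)) xnext := by
      exact (InnerProductSpace.toDual ℝ (Vec d) (ψ' xt)).hasFDerivAt
    have h3 : HasFDerivAt (fun x : Vec d => ⟪ψ' xt, x - xt⟫)
        (InnerProductSpace.toDual ℝ (Vec d) (ψ' xt)) xnext := by
      simpa [inner_sub_right] using h4.sub_const ⟪ψ' xt, xt⟫
    have hd : HasFDerivAt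
        (fun x : Vec d => ηt * ⟪F' xmd, x⟫ + (ψ x - ψ xt - ⟪ψ' xt, x - xt⟫))
        (ηt • (InnerProductSpace.toDual ℝ (Vec d) (F' xmd)) +
          ((InnerProductSpace.toDual ℝ (Vec d) (ψ' xnext)) -
            (InnerProductSpace.toDual ℝ (Vec d) (ψ' xt)))) xnext :=
      (h1.const_mul ηt).add (((hψ' xnext).hasFDerivAt.sub_const (ψ xt)).sub h3)
    have h0 := hloc.hasFDerivAt_eq_zero hd
    intro v
    have hv := DFunLike.congr_fun h0 v
    simpa using hv
  -- three-point identity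
  have key3 : ηt * ⟪F' xmd, xnext - xstar⟫ =
      breg ψ ψ' xstar xt - breg ψ ψ' xstar xnext - breg ψ ψ' xnext xt := by
    have h := opt (xstar - xnext)
    simp only [breg, inner_sub_right] at h ⊢
    linarith
  -- star convexity at xmd
  have hstar' : ηt/τ * (F xmd - F xstar) ≤ ηt * ⟪F' xmd, xmd - xstar⟫ := by
    have h1 := hstar xmd
    have h2 : (0:ℝ) ≤ ηt/τ := le_of_lt (div_pos hη hτ)
    have h3 := mul_le_mul_of_nonneg_left h1 h2
    have h4 : ηt/τ*(τ*⟪F' xmd, xmd - xstar⟫) = ηt*⟪F' xmd, xmd - xstar⟫ := by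
      field_simp
    linarith
  -- exponent arithmetic
  have e1 : qstar * (q-1) = q := by rw [hqs]; field_simp
  have e2 : (qstar - 1) * (q-1) = 1 := by rw [hqs]; field_simp; ring
  have hAq : At ^ (q-1) = ηt ^ q / αt := by
    rw [hAt, Real.div_rpow (Real.rpow_nonneg hη.le _) (Real.rpow_nonneg hα.le _),
      ← Real.rpow_mul hη.le, ← Real.rpow_mul hα.le, e1, e2, Real.rpow_one]
  set c := ηt / At with hc
  have hc0 : 0 < c := div_pos hη hAt0
  have hAtc : At * c = ηt := by rw [hc]; field_simp
  have hcq : At * c ^ q = αt := by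
    rw [hc, Real.div_rpow hη.le hAt0.le]
    have hAq' : At ^ q = At ^ (q-1) * At := by
      conv_lhs => rw [show q = q - 1 + 1 by ring]
      rw [Real.rpow_add hAt0, Real.rpow_one]
    rw [hAq', hAq]
    have hηq : (0:ℝ) < ηt ^ q := Real.rpow_pos_of_pos hη _
    field_simp
  set β := At / αt with hβ
  have hβ0 : 0 < β := div_pos hAt0 hα
  have hβα : β * αt = At := div_mul_cancel₀ _ hα.ne'
  have hβcq : β * c ^ q = 1 := by
    rw [hβ, div_mul_eq_mul_div, hcq, div_self hα.ne']
  -- the Young constant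
  set Cst := r/q * (L^(1+1/r)) * αt^(1/r) / μ^(1/r) with hCst
  have hAtC : At * Cst = Bt := by
    have hM1r : M^(1/r) = r/q := by
      rw [hM, ← Real.rpow_mul (div_nonneg hr0.le hq0.le),
        mul_one_div_cancel hr0.ne', Real.rpow_one]
    have hαsub : αt^(qstar - 1 - 1/r) = αt^(qstar-1) / αt^(1/r) := Real.rpow_sub hα _ _
    rw [hBt, hM1r, hαsub, hAt, hCst]
    have p1 : (0:ℝ) < αt^(qstar-1) := Real.rpow_pos_of_pos hα _
    have p2 : (0:ℝ) < αt^(1/r) := Real.rpow_pos_of_pos hα _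
    have p3 : (0:ℝ) < μ^(1/r) := Real.rpow_pos_of_pos hμ _
    field_simp
  -- Young's inequality instantiated
  have young : ∀ u : Vec d, L/κ * N u ^ κ ≤ μ/(αt*q) * N u ^ q + Cst := by
    intro u
    set s := μ/(αt*L) with hsdef
    have hs : 0 < s := by rw [hsdef]; positivity
    have h := young_aux hκ0 hκq hs (hNnn u)
    have hm := mul_le_mul_of_nonneg_left h (by positivity : (0:ℝ) ≤ L/κ)
    have c1 : L/κ * (κ/q * (s * N u ^ q)) = μ/(αt*q) * N u ^ q := by
      rw [hsdef]; field_simp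
    have c2 : L/κ * ((q-κ)/q * s^(-(κ/(q-κ)))) = Cst := by
      have hsrw : s^(-(κ/(q-κ))) = αt^(1/r) * L^(1/r) / μ^(1/r) := by
        rw [← hrinv, Real.rpow_neg hs.le, hsdef,
          Real.div_rpow hμ.le (by positivity),
          Real.mul_rpow hα.le hL.le, inv_div]
      have hL1 : L^(1+1/r) = L*L^(1/r) := by
        rw [Real.rpow_add hL, Real.rpow_one]
      rw [hsrw, hCst, hL1, hr]
      have p3 : (0:ℝ) < μ^(1/r) := Real.rpow_pos_of_pos hμ _
      field_simp
    linarith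
  -- smoothness at (xagnext, xmd)
  have hsm := (abs_le.mp (hweak xagnext xmd)).2
  simp only [breg] at hsm
  have hy := young (xagnext - xmd)
  have ha1 : αt * (F xagnext - F xmd - ⟪F' xmd, xagnext - xmd⟫) ≤
      μ/q * N (xagnext - xmd)^q + αt * Cst := by
    have h := mul_le_mul_of_nonneg_left (le_trans hsm hy) hα.le
    have hc1 : αt * (μ/(αt*q) * N (xagnext-xmd)^q) = μ/q * N (xagnext-xmd)^q := by
      field_simp
    linarith
  -- the ag-minimization step, compared at xmd + c • (xnext - xt)
  have hmin2 : αt * ⟪F' xmd, xagnext - xmd⟫ + μ/q * N (xagnext - xmd)^q ≤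
      αt * (c * ⟪F' xmd, xnext - xt⟫) + μ/q * (c^q * N (xnext - xt)^q) := by
    have h := hminag (xmd + c • (xnext - xt))
    have e4 : xmd + c • (xnext - xt) - xmd = c • (xnext - xt) := add_sub_cancel_left _ _
    have e5 : ⟪F' xmd, xmd + c • (xnext - xt)⟫ = ⟪F' xmd, xmd⟫ + c * ⟪F' xmd, xnext - xt⟫ := by
      rw [inner_add_right, real_inner_smul_right]
    have e6 : N (c • (xnext - xt)) = c * N (xnext - xt) := by
      rw [hN.smul_eq, abs_of_pos hc0]
    have e7 : (c * N (xnext - xt))^q = c^q * N (xnext - xt)^q :=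
      Real.mul_rpow hc0.le (hNnn _)
    rw [e4, e5, e6, e7] at h
    have e8 : αt * ⟪F' xmd, xagnext - xmd⟫ =
        αt * ⟪F' xmd, xagnext⟫ - αt * ⟪F' xmd, xmd⟫ := by
      rw [inner_sub_right]; ring
    linarith
  have hsum : αt * (F xagnext - F xmd) ≤
      αt * (c * ⟪F' xmd, xnext - xt⟫) + μ/q * (c^q * N (xnext - xt)^q) + αt * Cst := by
    linarith
  have hfin : At * (F xagnext - F xmd) ≤
      ηt * ⟪F' xmd, xnext - xt⟫ + μ/q * N (xnext - xt)^q + Bt := by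
    have h := mul_le_mul_of_nonneg_left hsum hβ0.le
    have lhsa : β * (αt * (F xagnext - F xmd)) = At * (F xagnext - F xmd) := by
      rw [← hβα]; ring
    have rhsa : β * (αt * (c * ⟪F' xmd, xnext - xt⟫) + μ/q * (c^q * N (xnext - xt)^q)
        + αt * Cst) = ηt * ⟪F' xmd, xnext - xt⟫ + μ/q * N (xnext - xt)^q + Bt := by
      linear_combination (c*⟪F' xmd, xnext - xt⟫ + Cst) * hβα +
        ⟪F' xmd, xnext - xt⟫ * hAtc + (μ/q * N (xnext - xt)^q) * hβcq + hAtC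
    linarith
  -- decomposition of the inner product
  have hI4 : ηt * ⟪F' xmd, xnext - xt⟫ = ηt * ⟪F' xmd, xnext - xstar⟫
      + ηt * ⟪F' xmd, xmd - xt⟫ - ηt * ⟪F' xmd, xmd - xstar⟫ := by
    simp only [inner_sub_right]; ring
  have huc := hunif xnext xt
  linarith [hfin, key3, hstar', hbin, huc, hI4]
end
end

section
/- Let ‖·‖ be an arbitrary norm on ℝ^d and let F : ℝ^d → ℝ be differentiable and (L,κ)-weakly smooth with respect to ‖·‖ (1 < κ ≤ 2). Fix a, b ∈ ℝ^d and define g : ℝ → ℝ by g(λ) := F(a + λ b). Then g is differentiable with g'(λ) = ⟨∇F(a + λb), b⟩, and for all λ₁, λ₂ ∈ ℝ: |g'(λ₁) − g'(λ₂)| ≤ (2L/κ) ‖b‖^κ |λ₁ − λ₂|^{κ−1}. -/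
open scoped RealInnerProductSpace BigOperators

noncomputable section

/-- For (L,κ)-weakly smooth `F` and `g(λ) = F(a + λb)`, the function `g` is
differentiable with `g'(λ) = ⟨∇F(a + λb), b⟩`, and
`|g'(λ₁) − g'(λ₂)| ≤ (2L/κ)‖b‖^κ |λ₁ − λ₂|^{κ−1}`. -/
theorem stmt_8 {d : ℕ} (N : Vec d → ℝ) (hN : IsNorm N)
    (F : Vec d → ℝ) (F' : Vec d → Vec d)
    (hF' : ∀ x, HasGradientAt F (F' x) x)
    (L κ : ℝ) (hL : 0 < L) (hκ1 : 1 < κ) (hκ2 : κ ≤ 2)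
    (hweak : ∀ x y : Vec d, |breg F F' x y| ≤ L / κ * N (x - y) ^ κ)
    (a b : Vec d) :
    (∀ lam : ℝ, HasDerivAt (fun l : ℝ => F (a + l • b)) ⟪F' (a + lam • b), b⟫ lam) ∧
      ∀ l1 l2 : ℝ,
        |⟪F' (a + l1 • b), b⟫ - ⟪F' (a + l2 • b), b⟫| ≤
          2 * L / κ * N b ^ κ * |l1 - l2| ^ (κ - 1) := by

  have hNnonneg : ∀ x : Vec d, 0 ≤ N x := by
    intro x
    have h1 := hN.add_le x (-x)
    have h2 : N (-x) = N x := by simpa using hN.smul_eq (-1) x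
    have h0 : N (x + -x) = 0 := by
      rw [add_neg_cancel]; exact (hN.eq_zero_iff 0).mpr rfl
    linarith
  constructor
  · intro lam
    have hline : HasDerivAt (fun l : ℝ => a + l • b) b lam := by
      simpa using ((hasDerivAt_id lam).smul_const b).const_add a
    have := (hF' (a + lam • b)).hasFDerivAt.comp_hasDerivAt lam hline
    exact this
  · intro l1 l2
    set x := a + l1 • b with hx
    set y := a + l2 • b with hy
    have hκ0 : (0:ℝ) < κ := by linarith
    have hxy : x - y = (l1 - l2) • b := by
      simp [hx, hy, sub_smul]
    have hsym : ⟪F' x - F' y, x - y⟫ = breg F F' x y + breg F F' y x := by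
      have h1 : y - x = -(x - y) := (neg_sub x y).symm
      simp only [breg, h1, inner_neg_right, inner_sub_left]
      ring
    have hval : ⟪F' x - F' y, x - y⟫ = (l1 - l2) * (⟪F' x, b⟫ - ⟪F' y, b⟫) := by
      rw [hxy, real_inner_smul_right, inner_sub_left]
    have hNyx : N (y - x) = N (x - y) := by
      have : y - x = (-1 : ℝ) • (x - y) := by simp [neg_sub]
      rw [this, hN.smul_eq]; simp
    have hNxy : N (x - y) = |l1 - l2| * N b := by rw [hxy, hN.smul_eq]
    have habs : |l1 - l2| * |⟪F' x, b⟫ - ⟪F' y, b⟫| ≤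
        2 * (L / κ) * (|l1 - l2| * N b) ^ κ := by
      have h1 := hweak x y
      have h2 := hweak y x
      calc |l1 - l2| * |⟪F' x, b⟫ - ⟪F' y, b⟫|
          = |⟪F' x - F' y, x - y⟫| := by rw [hval, abs_mul]
        _ = |breg F F' x y + breg F F' y x| := by rw [hsym]
        _ ≤ |breg F F' x y| + |breg F F' y x| := abs_add_le _ _
        _ ≤ L / κ * N (x - y) ^ κ + L / κ * N (y - x) ^ κ := add_le_add h1 h2
        _ = 2 * (L / κ) * (|l1 - l2| * N b) ^ κ := by rw [hNyx, hNxy]; ring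
    rcases eq_or_ne l1 l2 with h | h
    · subst h
      simp [hx, hy, Real.zero_rpow (by linarith : κ - 1 ≠ 0)]
    · have ht : (0:ℝ) < |l1 - l2| := abs_pos.mpr (sub_ne_zero.mpr h)
      have hsplit : (|l1 - l2| * N b) ^ κ = |l1 - l2| ^ κ * N b ^ κ :=
        Real.mul_rpow ht.le (hNnonneg b)
      have hpow : |l1 - l2| ^ κ = |l1 - l2| ^ (κ - 1) * |l1 - l2| := by
        have h3 := Real.rpow_add ht (κ - 1) 1
        rw [Real.rpow_one, sub_add_cancel] at h3
        exact h3
      have key : |l1 - l2| * |⟪F' x, b⟫ - ⟪F' y, b⟫| ≤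
          |l1 - l2| * (2 * L / κ * N b ^ κ * |l1 - l2| ^ (κ - 1)) := by
        rw [hsplit, hpow] at habs
        calc |l1 - l2| * |⟪F' x, b⟫ - ⟪F' y, b⟫|
            ≤ 2 * (L / κ) * (|l1 - l2| ^ (κ - 1) * |l1 - l2| * N b ^ κ) := habs
          _ = |l1 - l2| * (2 * L / κ * N b ^ κ * |l1 - l2| ^ (κ - 1)) := by ring
      exact le_of_mul_le_mul_left key ht
end
end

section
/- Let ‖·‖ be an arbitrary norm on ℝ^d, let F : ℝ^d → ℝ be differentiable and (L,κ)-weakly smooth with respect to ‖·‖ (1 < κ ≤ 2), let x_t, x_t^{ag} ∈ ℝ^d with x_t ≠ x_t^{ag}, and let C_t, ε_t > 0. Define g(λ) := F(λ x_t^{ag} + (1−λ) x_t) − F(x_t^{ag}) for λ ∈ [0,1], so g(1) = 0. Suppose g(0) > 0 and g'(1) > 0. Then: (i) there exists λ⋆ ∈ [0,1] with g(λ⋆) ≤ 0 and g'(λ⋆) = 0; and (ii) setting δ := min{ 1/C_t, (κ ε_t/(4 L ‖x_t − x_t^{ag}‖^κ))^{1/(κ−1)} }, for every such λ⋆ and every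 λ ∈ [λ⋆ − δ, λ⋆] ∩ [0,1], the binary-search stopping condition C_t g(λ) + λ g'(λ) ≤ ε_t holds. -/
open scoped RealInnerProductSpace BigOperators

open Topology Filter

private lemma aux_final (L κ M εt : ℝ) (hL : 0 < L) (hκ0 : 0 < κ) (hMκ : 0 < M ^ κ) :
    L / κ * (κ * εt / (4 * L * M ^ κ)) * M ^ κ = εt / 4 := by
  obtain ⟨P, hPpos, hP⟩ : ∃ P : ℝ, 0 < P ∧ M ^ κ = P := ⟨M ^ κ, hMκ, rfl⟩
  rw [hP]
  field_simp

noncomputable section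

set_option maxHeartbeats 1000000

/-- Correctness of the binary-search target: for weakly smooth `F` with
`g(λ) = F(λ x^{ag} + (1−λ)x) − F(x^{ag})`, `g(0) > 0` and `g'(1) > 0`, (i) there
is `λ⋆ ∈ [0,1]` with `g(λ⋆) ≤ 0`, `g'(λ⋆) = 0`; and (ii) every
`λ ∈ [λ⋆ − δ, λ⋆] ∩ [0,1]` with
`δ = min{1/C_t, (κ ε_t/(4L‖x_t − x_t^{ag}‖^κ))^{1/(κ−1)}}` satisfies the
stopping condition `C_t g(λ) + λ g'(λ) ≤ ε_t`. -/
theorem stmt_10 {d : ℕ} (N : Vec d → ℝ) (hN : IsNorm N)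
    (F : Vec d → ℝ) (F' : Vec d → Vec d)
    (hF' : ∀ x, HasGradientAt F (F' x) x)
    (L κ : ℝ) (hL : 0 < L) (hκ1 : 1 < κ) (hκ2 : κ ≤ 2)
    (hweak : ∀ x y : Vec d, |breg F F' x y| ≤ L / κ * N (x - y) ^ κ)
    (xt xag : Vec d) (hne : xt ≠ xag)
    (Ct εt : ℝ) (hC : 0 < Ct) (hε : 0 < εt)
    (g gd : ℝ → ℝ)
    (hg : g = fun l : ℝ => F (l • xag + (1 - l) • xt) - F xag)
    (hgd : gd = fun l : ℝ => ⟪F' (l • xag + (1 - l) • xt), xag - xt⟫)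
    (hg0 : 0 < g 0) (hgd1 : 0 < gd 1) :
    (∃ lstar ∈ Set.Icc (0 : ℝ) 1, g lstar ≤ 0 ∧ gd lstar = 0) ∧
      ∀ lstar ∈ Set.Icc (0 : ℝ) 1, g lstar ≤ 0 → gd lstar = 0 →
        ∀ l ∈ Set.Icc
            (lstar - min (1 / Ct) ((κ * εt / (4 * L * N (xt - xag) ^ κ)) ^ (1 / (κ - 1))))
            lstar ∩ Set.Icc (0 : ℝ) 1,
          Ct * g l + l * gd l ≤ εt := by
  classical
  have hNneg : ∀ x : Vec d, N (-x) = N x := by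
    intro x
    have := hN.smul_eq (-1) x
    simpa using this
  have hNnonneg : ∀ x : Vec d, 0 ≤ N x := by
    intro x
    have h0 : N (0 : Vec d) = 0 := (hN.eq_zero_iff 0).mpr rfl
    have h := hN.add_le x (-x)
    rw [add_neg_cancel, h0, hNneg] at h
    linarith
  set M : ℝ := N (xt - xag) with hM
  clear_value M
  have hM0 : 0 < M := by
    rw [hM]
    rcases lt_or_eq_of_le (hNnonneg (xt - xag)) with h | h
    · exact h
    · exact absurd (sub_eq_zero.mp ((hN.eq_zero_iff _).mp h.symm)) hne
  have hκ0 : (0:ℝ) < κ := lt_trans one_pos hκ1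
  have hκ1' : (0:ℝ) < κ - 1 := by linarith
  have hMκ : 0 < M ^ κ := Real.rpow_pos_of_pos hM0 κ
  have hLκ : 0 < L / κ := div_pos hL hκ0
  have hder : ∀ l : ℝ, HasDerivAt g (gd l) l := by
    intro l
    rw [hg, hgd]
    have h1 : HasDerivAt (fun y : ℝ => y • xag) ((1:ℝ) • xag) l :=
      (hasDerivAt_id l).smul_const xag
    have h2 : HasDerivAt (fun y : ℝ => (1 - y) • xt) ((-1:ℝ) • xt) l := by
      simpa using ((hasDerivAt_id l).const_sub 1).smul_const xt
    have hγ : HasDerivAt (fun y : ℝ => y • xag + (1 - y) • xt) (xag - xt) l := by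
      have h3 := h1.add h2
      have h4 : (1:ℝ) • xag + (-1:ℝ) • xt = xag - xt := by module
      rw [h4] at h3
      exact h3
    have h := ((hF' (l • xag + (1 - l) • xt)).hasFDerivAt.comp_hasDerivAt l hγ).sub_const (F xag)
    simpa [Function.comp, InnerProductSpace.toDual_apply_apply] using h
  have hcont : ContinuousOn g (Set.Icc 0 1) := fun x _ =>
    (hder x).continuousAt.continuousWithinAt
  have hg1 : g 1 = 0 := by rw [hg]; simp
  have key : ∀ a b : ℝ, |g a - g b - (a - b) * gd b| ≤ L / κ * (|a - b| * M) ^ κ := by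
    intro a b
    have h := hweak (a • xag + (1 - a) • xt) (b • xag + (1 - b) • xt)
    rw [breg] at h
    have hsub : (a • xag + (1 - a) • xt) - (b • xag + (1 - b) • xt)
        = (a - b) • (xag - xt) := by module
    rw [hsub, real_inner_smul_right, hN.smul_eq] at h
    have hNe : N (xag - xt) = M := by
      rw [hM, show xag - xt = -(xt - xag) by abel, hNneg]
    rw [hNe] at h
    rw [hg, hgd]
    simp only
    have heq : (F (a • xag + (1 - a) • xt) - F xag) - (F (b • xag + (1 - b) • xt) - F xag)
        - (a - b) * ⟪F' (b • xag + (1 - b) • xt), xag - xt⟫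
        = F (a • xag + (1 - a) • xt) - F (b • xag + (1 - b) • xt)
        - (a - b) * ⟪F' (b • xag + (1 - b) • xt), xag - xt⟫ := by ring
    rw [heq]
    exact h
  obtain ⟨lstar, hlsmem, hmin⟩ :=
    isCompact_Icc.exists_isMinOn (Set.nonempty_Icc.mpr zero_le_one) hcont
  have hgls : g lstar ≤ 0 := by
    have := hmin (Set.right_mem_Icc.mpr zero_le_one)
    simpa [hg1] using this
  have hls0 : 0 < lstar := by
    rcases lt_or_eq_of_le hlsmem.1 with h | h
    · exact h
    · exfalso
      rw [← h] at hgls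
      linarith
  have hls1 : lstar < 1 := by
    rcases lt_or_eq_of_le hlsmem.2 with h | h
    · exact h
    · exfalso
      have hslope := hasDerivAt_iff_tendsto_slope.mp (hder 1)
      have hmono : 𝓝[<] (1:ℝ) ≤ 𝓝[≠] (1:ℝ) :=
        nhdsWithin_mono 1 (fun y hy => ne_of_lt hy)
      have hlt : ∀ᶠ y in 𝓝[<] (1:ℝ), 0 < slope g 1 y :=
        (hslope.mono_left hmono).eventually (eventually_gt_nhds hgd1)
      have hmem : ∀ᶠ y in 𝓝[<] (1:ℝ), 0 < y := by
        apply mem_nhdsWithin_of_mem_nhds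
        exact eventually_gt_nhds one_pos
      have hlt1 : ∀ᶠ y in 𝓝[<] (1:ℝ), y < 1 := eventually_mem_nhdsWithin
      obtain ⟨y, hy1, hy2, hy3⟩ := (hlt.and (hmem.and hlt1)).exists
      rw [slope_def_field] at hy1
      have hgy : g y < 0 := by
        rw [div_pos_iff] at hy1
        rcases hy1 with ⟨h1, h2⟩ | ⟨h1, h2⟩
        · linarith
        · rw [hg1] at h1; linarith
      have hmin_y : g lstar ≤ g y := hmin (Set.mem_Icc.mpr ⟨le_of_lt hy2, le_of_lt hy3⟩)
      rw [h, hg1] at hmin_y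
      linarith
  have hζ : gd lstar = 0 := by
    have hloc : IsLocalMin g lstar := hmin.isLocalMin (Icc_mem_nhds hls0 hls1)
    exact hloc.hasDerivAt_eq_zero (hder lstar)
  refine ⟨⟨lstar, hlsmem, hgls, hζ⟩, ?_⟩
  intro ls hls hgls' hgd' l hl
  obtain ⟨⟨hl1, hl2⟩, hl0, hl3⟩ := hl
  set X : ℝ := κ * εt / (4 * L * M ^ κ) with hX
  clear_value X
  have hXpos : 0 < X := by
    rw [hX]
    apply div_pos (by positivity)
    positivity
  set E : ℝ := X ^ (1 / (κ - 1)) with hE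
  clear_value E
  have hEpos : 0 < E := by rw [hE]; exact Real.rpow_pos_of_pos hXpos _
  set δ : ℝ := min (1 / Ct) E with hδ
  clear_value δ
  have hδpos : 0 < δ := by rw [hδ]; exact lt_min (by positivity) hEpos
  set s : ℝ := ls - l with hs
  clear_value s
  have hs0 : 0 ≤ s := by simp only [hs]; linarith
  have hsδ : s ≤ δ := by simp only [hs, hδ]; linarith
  have hCtδ : Ct * δ ≤ 1 := by
    have h1 : δ ≤ 1 / Ct := by rw [hδ]; exact min_le_left _ _
    calc Ct * δ ≤ Ct * (1 / Ct) := by nlinarith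
    _ = 1 := by field_simp
  have hδκ : δ ^ (κ - 1) ≤ X := by
    have h1 : δ ≤ E := by rw [hδ]; exact min_le_right _ _
    have h2 : δ ^ (κ - 1) ≤ E ^ (κ - 1) :=
      Real.rpow_le_rpow (le_of_lt hδpos) h1 (le_of_lt hκ1')
    have h3 : E ^ (κ - 1) = X := by
      rw [hE, ← Real.rpow_mul (le_of_lt hXpos)]
      rw [one_div, inv_mul_cancel₀ (ne_of_gt hκ1'), Real.rpow_one]
    linarith
  rcases eq_or_lt_of_le hs0 with hseq | hspos
  · have hleq : l = ls := by simp only [hs] at hseq; linarith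
    rw [hleq, hgd']
    have : Ct * g ls ≤ 0 := mul_nonpos_of_nonneg_of_nonpos (le_of_lt hC) hgls'
    nlinarith
  · set A : ℝ := L / κ * (s * M) ^ κ with hA
    clear_value A
    have hB1 : |g l - g ls| ≤ A := by
      have h := key l ls
      rw [hgd'] at h
      have habs : |l - ls| = s := by
        rw [abs_sub_comm, ← hs, abs_of_nonneg hs0]
      rw [habs] at h
      simpa [hA] using h
    have hB2 : |g ls - g l - s * gd l| ≤ A := by
      have h := key ls l
      have habs : |ls - l| = s := by rw [← hs, abs_of_nonneg hs0]
      rw [habs] at h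
      simpa [hA, hs] using h
    have hA_split : A = s * (L / κ * s ^ (κ - 1) * M ^ κ) := by
      rw [hA, Real.mul_rpow hs0 (le_of_lt hM0)]
      rw [show κ = 1 + (κ - 1) by ring, Real.rpow_add hspos, Real.rpow_one]
      ring
    set B : ℝ := L / κ * δ ^ (κ - 1) * M ^ κ with hB
    clear_value B
    have hsκ : s ^ (κ - 1) ≤ δ ^ (κ - 1) :=
      Real.rpow_le_rpow hs0 hsδ (le_of_lt hκ1')
    have hsκ0 : 0 ≤ s ^ (κ - 1) := Real.rpow_nonneg hs0 _
    have hδκ0 : 0 ≤ δ ^ (κ - 1) := Real.rpow_nonneg (le_of_lt hδpos) _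
    have hB0 : 0 ≤ B := by
      rw [hB]; exact mul_nonneg (mul_nonneg (le_of_lt hLκ) hδκ0) (le_of_lt hMκ)
    have hinner_le : L / κ * s ^ (κ - 1) * M ^ κ ≤ B := by
      rw [hB]
      exact mul_le_mul_of_nonneg_right
        (mul_le_mul_of_nonneg_left hsκ (le_of_lt hLκ)) (le_of_lt hMκ)
    have hinner0 : 0 ≤ L / κ * s ^ (κ - 1) * M ^ κ :=
      mul_nonneg (mul_nonneg (le_of_lt hLκ) hsκ0) (le_of_lt hMκ)
    have hgl : g l ≤ A := by
      have := (abs_le.mp hB1).2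
      linarith
    have hterm1 : Ct * g l ≤ B := by
      have h1 : Ct * g l ≤ Ct * A := mul_le_mul_of_nonneg_left hgl (le_of_lt hC)
      have h2 : Ct * A = (Ct * s) * (L / κ * s ^ (κ - 1) * M ^ κ) := by
        rw [hA_split]; ring
      have h3 : Ct * s ≤ 1 := by
        have := mul_le_mul_of_nonneg_left hsδ (le_of_lt hC)
        linarith
      have h4 : (Ct * s) * (L / κ * s ^ (κ - 1) * M ^ κ) ≤
          1 * (L / κ * s ^ (κ - 1) * M ^ κ) :=
        mul_le_mul_of_nonneg_right h3 hinner0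
      calc Ct * g l ≤ Ct * A := h1
        _ = (Ct * s) * (L / κ * s ^ (κ - 1) * M ^ κ) := h2
        _ ≤ 1 * (L / κ * s ^ (κ - 1) * M ^ κ) := h4
        _ = L / κ * s ^ (κ - 1) * M ^ κ := by ring
        _ ≤ B := hinner_le
    have hgdl : s * gd l ≤ 2 * A := by
      have h1 := (abs_le.mp hB2).1
      have h2 := (abs_le.mp hB1).1
      linarith
    have hgdl' : gd l ≤ 2 * (L / κ * s ^ (κ - 1) * M ^ κ) := by
      rw [hA_split] at hgdl
      exact (mul_le_mul_iff_right₀ hspos).mp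
        (by linarith : s * gd l ≤ s * (2 * (L / κ * s ^ (κ - 1) * M ^ κ)))
    have hterm2 : l * gd l ≤ 2 * B := by
      rcases le_or_gt (gd l) 0 with hneg | hpos
      · have : l * gd l ≤ 0 := mul_nonpos_of_nonneg_of_nonpos hl0 hneg
        linarith
      · have h1 : l * gd l ≤ 1 * gd l :=
          mul_le_mul_of_nonneg_right hl3 (le_of_lt hpos)
        have h2 : gd l ≤ 2 * B := by linarith
        linarith
    have hBX : B ≤ L / κ * X * M ^ κ := by
      rw [hB]
      exact mul_le_mul_of_nonneg_right
        (mul_le_mul_of_nonneg_left hδκ (le_of_lt hLκ)) (le_of_lt hMκ)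
    have hfinal : L / κ * X * M ^ κ = εt / 4 := by
      rw [hX]
      exact aux_final L κ M εt hL hκ0 hMκ
    have hsum : Ct * g l + l * gd l ≤ 3 * B := by linarith
    have h3B : 3 * B ≤ 3 * (εt / 4) := by
      have hb := hBX
      rw [hfinal] at hb
      linarith
    linarith
end
end

section
/- Let C, ε, L⋆ > 0 and set C⋆ := 1 + 1/C. Let [a,b] ⊆ [1/C⋆, 1] with a < b, and let A, B, B' be reals satisfying: Φ(a,b,A,B,B') := 56 B'/(L⋆(b−a)) + 32(A−B)/(L⋆(b−a)²) ≤ 1, A ≥ ε/C, C·B + B'/C⋆ ≥ ε, and B' ≥ 0 ≥ B. Then there exist two functions g₁, g₂ : [a,b] → ℝ, differentiable with derivatives that are L⋆-Lipschitz on [a,b], such that g₁(a) = g₂(a) = A, g₁(b) = g₂(b) = B, g₁'(a) = g₂'(a) = 0, g₁'(b) = g₂'(b) = B', and moreover C·g₁(λ) + λ·g₁'(λ) ≥ ε for all λ ∈ [a, (a+b)/2], while C·g₂(λ) + λ·g₂'(λ) ≥ ε for all λ ∈ [(a+b)/2, b]. -/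
open Set

set_option maxHeartbeats 1000000

lemma hdw_of_nmem {f : ℝ → ℝ} {f' x : ℝ} {s : Set ℝ} (h : x ∉ closure s) :
    HasDerivWithinAt f f' s x :=
  HasFDerivWithinAt.of_notMem_closure h

lemma hasDerivAt_cubic (e0 e1 e2 e3 t x : ℝ) :
    HasDerivAt (fun y => e0 + e1 * (y - t) + e2 * (y - t) ^ 2 + e3 * (y - t) ^ 3)
      (e1 + 2 * e2 * (x - t) + 3 * e3 * (x - t) ^ 2) x := by
  have h1 : HasDerivAt (fun y : ℝ => y - t) 1 x := (hasDerivAt_id x).sub_const t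
  have H := (((h1.const_mul e1).add ((h1.pow 2).const_mul e2)).add
      ((h1.pow 3).const_mul e3)).const_add e0
  have H2 := H.congr_of_eventuallyEq
      (f₁ := fun y => e0 + e1 * (y - t) + e2 * (y - t) ^ 2 + e3 * (y - t) ^ 3)
      (Filter.Eventually.of_forall (fun y => by simp only [Pi.add_apply, Pi.pow_apply]; ring))
  refine H2.congr_deriv ?_
  push_cast
  ring

lemma hasDerivWithinAt_cubic' {f : ℝ → ℝ} (e0 e1 e2 e3 t : ℝ) {d x : ℝ} (s : Set ℝ)
    (hf : ∀ y, f y = e0 + e1 * (y - t) + e2 * (y - t) ^ 2 + e3 * (y - t) ^ 3)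
    (hd : d = e1 + 2 * e2 * (x - t) + 3 * e3 * (x - t) ^ 2) :
    HasDerivWithinAt f d s x := by
  have h := hasDerivAt_cubic e0 e1 e2 e3 t x
  have h2 := h.congr_of_eventuallyEq (f₁ := f) (Filter.Eventually.of_forall hf)
  rw [hd]
  exact h2.hasDerivWithinAt

lemma glue_deriv {f₁ f₂ f₁' f₂' : ℝ → ℝ} {a c b : ℝ} (hac : a ≤ c) (hcb : c ≤ b)
    (h₁ : ∀ x ∈ Icc a c, HasDerivWithinAt f₁ (f₁' x) (Icc a c) x)
    (h₂ : ∀ x ∈ Icc c b, HasDerivWithinAt f₂ (f₂' x) (Icc c b) x)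
    (hval : f₁ c = f₂ c) (hder : f₁' c = f₂' c) :
    ∀ x ∈ Icc a b, HasDerivWithinAt (fun y => if y ≤ c then f₁ y else f₂ y)
      (if x ≤ c then f₁' x else f₂' x) (Icc a b) x := by
  intro x hx
  have hunion : Icc a c ∪ Icc c b = Icc a b := Icc_union_Icc_eq_Icc hac hcb
  have hg1 : EqOn (fun y => if y ≤ c then f₁ y else f₂ y) f₁ (Icc a c) := by
    intro y hy; simp only [if_pos hy.2]
  have hg2 : EqOn (fun y => if y ≤ c then f₁ y else f₂ y) f₂ (Icc c b) := by
    intro y hy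
    by_cases h : y ≤ c
    · have hyc : y = c := le_antisymm h hy.1
      subst hyc
      simp only [if_pos h]
      exact hval
    · simp only [if_neg h]
  rw [← hunion]
  by_cases h : x ≤ c
  · rw [if_pos h]
    have hx1 : x ∈ Icc a c := ⟨hx.1, h⟩
    have H1 : HasDerivWithinAt (fun y => if y ≤ c then f₁ y else f₂ y) (f₁' x) (Icc a c) x :=
      (h₁ x hx1).congr hg1 (hg1 hx1)
    have H2 : HasDerivWithinAt (fun y => if y ≤ c then f₁ y else f₂ y) (f₁' x) (Icc c b) x := by
      rcases eq_or_lt_of_le h with rfl | hlt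
      · have hc : x ∈ Icc x b := ⟨le_refl x, hcb⟩
        have := (h₂ x hc).congr hg2 (hg2 hc)
        rwa [hder]
      · apply hdw_of_nmem
        rw [closure_Icc]
        intro hmem
        exact absurd hmem.1 (not_le.2 hlt)
    exact H1.union H2
  · rw [if_neg h]
    push_neg at h
    have hx2 : x ∈ Icc c b := ⟨le_of_lt h, hx.2⟩
    have H2 : HasDerivWithinAt (fun y => if y ≤ c then f₁ y else f₂ y) (f₂' x) (Icc c b) x :=
      (h₂ x hx2).congr hg2 (hg2 hx2)
    have H1 : HasDerivWithinAt (fun y => if y ≤ c then f₁ y else f₂ y) (f₂' x) (Icc a c) x := by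
      apply hdw_of_nmem
      rw [closure_Icc]
      intro hmem
      exact absurd hmem.2 (not_le.2 h)
    exact H1.union H2

lemma glue_lip {f₁' f₂' : ℝ → ℝ} {a c b Ls : ℝ} (hac : a ≤ c) (hcb : c ≤ b)
    (hder : f₁' c = f₂' c)
    (h₁ : ∀ x ∈ Icc a c, ∀ y ∈ Icc a c, |f₁' x - f₁' y| ≤ Ls * |x - y|)
    (h₂ : ∀ x ∈ Icc c b, ∀ y ∈ Icc c b, |f₂' x - f₂' y| ≤ Ls * |x - y|) :
    ∀ x ∈ Icc a b, ∀ y ∈ Icc a b,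
      |(if x ≤ c then f₁' x else f₂' x) - (if y ≤ c then f₁' y else f₂' y)| ≤ Ls * |x - y| := by
  have key : ∀ x ∈ Icc a b, ∀ y ∈ Icc a b, x ≤ c → ¬ y ≤ c →
      |f₁' x - f₂' y| ≤ Ls * |x - y| := by
    intro x hx y hy hxc hyc
    push_neg at hyc
    have t1 : |f₁' x - f₁' c| ≤ Ls * |x - c| := h₁ x ⟨hx.1, hxc⟩ c ⟨hac, le_refl c⟩
    have t2 : |f₂' c - f₂' y| ≤ Ls * |c - y| := h₂ c ⟨le_refl c, hcb⟩ y ⟨le_of_lt hyc, hy.2⟩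
    have e : f₁' x - f₂' y = (f₁' x - f₁' c) + (f₂' c - f₂' y) := by rw [hder]; ring
    have habs : |f₁' x - f₂' y| ≤ |f₁' x - f₁' c| + |f₂' c - f₂' y| := by
      rw [e]; exact abs_add_le _ _
    have e1 : |x - c| = c - x := by rw [abs_sub_comm]; exact abs_of_nonneg (by linarith)
    have e2 : |c - y| = y - c := by rw [abs_sub_comm]; exact abs_of_nonneg (by linarith)
    have e3 : |x - y| = y - x := by rw [abs_sub_comm]; exact abs_of_nonneg (by linarith)
    rw [e1] at t1; rw [e2] at t2; rw [e3]
    nlinarith [habs]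
  intro x hx y hy
  by_cases hxc : x ≤ c <;> by_cases hyc : y ≤ c
  · rw [if_pos hxc, if_pos hyc]; exact h₁ x ⟨hx.1, hxc⟩ y ⟨hy.1, hyc⟩
  · rw [if_pos hxc, if_neg hyc]; exact key x hx y hy hxc hyc
  · rw [if_neg hxc, if_pos hyc]
    rw [abs_sub_comm, abs_sub_comm x y]
    exact key y hy x hx hyc hxc
  · rw [if_neg hxc, if_neg hyc]
    push_neg at hxc hyc
    exact h₂ x ⟨le_of_lt hxc, hx.2⟩ y ⟨le_of_lt hyc, hy.2⟩

lemma quad_lip {c₂ c₃ p q Ls : ℝ}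
    (h0 : |2 * c₂| ≤ Ls) (h1 : |2 * c₂ + 6 * c₃ * (q - p)| ≤ Ls) :
    ∀ x ∈ Icc p q, ∀ y ∈ Icc p q,
      |(2 * c₂ * (x - p) + 3 * c₃ * (x - p) ^ 2) - (2 * c₂ * (y - p) + 3 * c₃ * (y - p) ^ 2)|
        ≤ Ls * |x - y| := by
  intro x hx y hy
  have key : |2 * c₂ + 3 * c₃ * ((x - p) + (y - p))| ≤ Ls := by
    rw [abs_le] at h0 h1 ⊢
    rcases le_total 0 c₃ with h | h
    · constructor
      · nlinarith [hx.1, hy.1]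
      · nlinarith [hx.2, hy.2]
    · constructor
      · nlinarith [hx.2, hy.2]
      · nlinarith [hx.1, hy.1]
  have e : (2 * c₂ * (x - p) + 3 * c₃ * (x - p) ^ 2) - (2 * c₂ * (y - p) + 3 * c₃ * (y - p) ^ 2)
      = (2 * c₂ + 3 * c₃ * ((x - p) + (y - p))) * (x - y) := by ring
  rw [e, abs_mul]
  exact mul_le_mul_of_nonneg_right key (abs_nonneg _)

/-- Two indistinguishable `L⋆`-smooth functions: under the condition
`Φ(a,b,A,B,B') ≤ 1` (with `Φ = 56B'/(L⋆(b−a)) + 32(A−B)/(L⋆(b−a)²)`) on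
`[a,b] ⊆ [1/C⋆, 1]`, there exist `g₁, g₂` with identical first-order boundary
data at `a` and `b`, such that `g₁` violates the binary-search stopping
condition on `[a,(a+b)/2]` and `g₂` violates it on `[(a+b)/2, b]`. -/
theorem stmt_14 (C ε Ls a b A B B' : ℝ) (hC : 0 < C) (hε : 0 < ε) (hLs : 0 < Ls)
    (hab : a < b) (ha : 1 / (1 + 1 / C) ≤ a) (hb : b ≤ 1)
    (hΦ : 56 * B' / (Ls * (b - a)) + 32 * (A - B) / (Ls * (b - a) ^ 2) ≤ 1)
    (hA : A ≥ ε / C) (hlin : C * B + B' / (1 + 1 / C) ≥ ε)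
    (hB' : 0 ≤ B') (hB : B ≤ 0) :
    ∃ g₁ g₁' g₂ g₂' : ℝ → ℝ,
      (∀ x ∈ Set.Icc a b, HasDerivWithinAt g₁ (g₁' x) (Set.Icc a b) x) ∧
      (∀ x ∈ Set.Icc a b, ∀ y ∈ Set.Icc a b, |g₁' x - g₁' y| ≤ Ls * |x - y|) ∧
      (∀ x ∈ Set.Icc a b, HasDerivWithinAt g₂ (g₂' x) (Set.Icc a b) x) ∧
      (∀ x ∈ Set.Icc a b, ∀ y ∈ Set.Icc a b, |g₂' x - g₂' y| ≤ Ls * |x - y|) ∧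
      g₁ a = A ∧ g₂ a = A ∧ g₁ b = B ∧ g₂ b = B ∧
      g₁' a = 0 ∧ g₂' a = 0 ∧ g₁' b = B' ∧ g₂' b = B' ∧
      (∀ l ∈ Set.Icc a ((a + b) / 2), C * g₁ l + l * g₁' l ≥ ε) ∧
      (∀ l ∈ Set.Icc ((a + b) / 2) b, C * g₂ l + l * g₂' l ≥ ε) := by
  set c₀ := 1 / (1 + 1 / C) with hc₀def
  set m := (a + b) / 2 with hmdef
  set δ := (b - a) / 2 with hδdef
  have hδ : 0 < δ := by rw [hδdef]; linarith
  have hma : m - a = δ := by rw [hmdef, hδdef]; ring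
  have hbm : b - m = δ := by rw [hmdef, hδdef]; ring
  have ham : a ≤ m := by linarith
  have hmb : m ≤ b := by linarith
  have hmltb : m < b := by linarith
  have hCp : (0 : ℝ) < C + 1 := by linarith
  have hεC : 0 < ε / C := div_pos hε hC
  have hD : 0 < A - B := by linarith [hA]
  -- key quantitative consequence of hΦ
  have hd0 : 0 < b - a := by linarith
  have hden1 : (0:ℝ) < Ls * (b - a) := by positivity
  have hden2 : (0:ℝ) < Ls * (b - a) ^ 2 := by positivity
  rw [div_add_div _ _ (ne_of_gt hden1) (ne_of_gt hden2), div_le_one (by positivity)] at hΦ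
  have hK0 : 56 * (B' * (b - a)) + 32 * (A - B) ≤ Ls * (b - a) ^ 2 := by
    have h3 : (56 * (B' * (b - a)) + 32 * (A - B)) * (Ls * (b - a))
        ≤ (Ls * (b - a) ^ 2) * (Ls * (b - a)) := by linarith [hΦ]
    exact le_of_mul_le_mul_right h3 hden1
  have hbaδ : b - a = 2 * δ := by rw [hδdef]; ring
  have hK : 8 * (A - B) + 28 * (B' * δ) ≤ Ls * δ ^ 2 := by
    rw [hbaδ] at hK0; linarith [hK0]
  -- C⋆ facts
  have hCc₀ : (C + 1) * c₀ = C := by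
    rw [hc₀def]; field_simp
  have h1C : (C + 1) * (b - a) ≤ 1 := by
    linarith [mul_le_mul_of_nonneg_left ha hCp.le, mul_le_mul_of_nonneg_left hb hCp.le, hCc₀]
  -- coefficients
  set k := 2 * (C + 1) * B' with hkdef
  have hk0 : 0 ≤ k := by rw [hkdef]; positivity
  have h2δ : (C + 1) * (2 * δ) ≤ 1 := by rw [← hbaδ]; exact h1C
  have hhalf : k * δ ≤ B' := by
    rw [hkdef]
    linarith [mul_le_mul_of_nonneg_right h2δ hB']
  have hkLs : k ≤ Ls := by
    refine le_of_mul_le_mul_right ?_ (show (0:ℝ) < δ ^ 2 by positivity)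
    linarith [mul_le_mul_of_nonneg_right hhalf hδ.le, hK, hD,
      mul_nonneg hB' hδ.le, mul_nonneg hLs.le (sq_nonneg δ)]
  have key : ∀ X Y : ℝ, X * δ ^ 2 = Y → -(Ls * δ ^ 2) ≤ Y → Y ≤ Ls * δ ^ 2 → |X| ≤ Ls := by
    intro X Y hXY hY1 hY2
    rw [abs_le]
    constructor
    · refine le_of_mul_le_mul_right ?_ (show (0:ℝ) < δ ^ 2 by positivity)
      rw [hXY]; linarith
    · refine le_of_mul_le_mul_right ?_ (show (0:ℝ) < δ ^ 2 by positivity)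
      rw [hXY]; linarith
  set c₂ := (3 * (B - A) - B' * δ) / δ ^ 2 with hc₂def
  set c₃ := (2 * (A - B) + B' * δ) / δ ^ 3 with hc₃def
  set y1 := B - B' * δ - (C + 1) * B' * δ ^ 2 with hy1def
  set m1 := B' + k * δ with hm1def
  set d₂ := (3 * (y1 - A) - m1 * δ) / δ ^ 2 with hd₂def
  set d₃ := (-2 * (y1 - A) + m1 * δ) / δ ^ 3 with hd₃def
  -- endpoint second-derivative bounds for g₁ cubic
  have ec1 : 2 * c₂ * δ ^ 2 = -6 * (A - B) - 2 * (B' * δ) := by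
    rw [hc₂def]; field_simp; ring
  have ec2 : (2 * c₂ + 6 * c₃ * δ) * δ ^ 2 = 6 * (A - B) + 4 * (B' * δ) := by
    rw [hc₂def, hc₃def]; field_simp; ring
  have hbc1 : |2 * c₂| ≤ Ls :=
    key _ _ ec1 (by linarith [hK, hD, mul_nonneg hB' hδ.le, mul_nonneg hLs.le (sq_nonneg δ)])
      (by linarith [hK, hD, mul_nonneg hB' hδ.le, mul_nonneg hLs.le (sq_nonneg δ)])
  have hbc2 : |2 * c₂ + 6 * c₃ * δ| ≤ Ls :=
    key _ _ ec2 (by linarith [hK, hD, mul_nonneg hB' hδ.le, mul_nonneg hLs.le (sq_nonneg δ)])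
      (by linarith [hK, hD, mul_nonneg hB' hδ.le, mul_nonneg hLs.le (sq_nonneg δ)])
  -- endpoint second-derivative bounds for g₂ cubic
  have hq : (C + 1) * B' * δ ^ 2 * 2 ≤ B' * δ := by
    have h5 := mul_le_mul_of_nonneg_right hhalf hδ.le
    rw [hkdef] at h5
    linarith [h5]
  have ed1 : 2 * d₂ * δ ^ 2 =
      -6 * (A - B) - 8 * (B' * δ) - 10 * ((C + 1) * B' * δ ^ 2) := by
    rw [hd₂def, hy1def, hm1def, hkdef]; field_simp; ring
  have ed2 : (2 * d₂ + 6 * d₃ * δ) * δ ^ 2 =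
      6 * (A - B) + 10 * (B' * δ) + 14 * ((C + 1) * B' * δ ^ 2) := by
    rw [hd₂def, hd₃def, hy1def, hm1def, hkdef]; field_simp; ring
  have hcc : 0 ≤ (C + 1) * B' * δ ^ 2 := by positivity
  have hbd1 : |2 * d₂| ≤ Ls :=
    key _ _ ed1
      (by linarith [hK, hD, mul_nonneg hB' hδ.le, hq, hcc, mul_nonneg hLs.le (sq_nonneg δ)])
      (by linarith [hK, hD, mul_nonneg hB' hδ.le, hq, hcc, mul_nonneg hLs.le (sq_nonneg δ)])
  have hbd2 : |2 * d₂ + 6 * d₃ * δ| ≤ Ls :=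
    key _ _ ed2
      (by linarith [hK, hD, mul_nonneg hB' hδ.le, hq, hcc, mul_nonneg hLs.le (sq_nonneg δ)])
      (by linarith [hK, hD, mul_nonneg hB' hδ.le, hq, hcc, mul_nonneg hLs.le (sq_nonneg δ)])
  -- value/derivative matching at m for g₂
  have hval2 : A + d₂ * (m - a) ^ 2 + d₃ * (m - a) ^ 3
      = B + B' * (m - b) - (C + 1) * B' * (m - b) ^ 2 := by
    have hmb' : m - b = -δ := by linarith
    rw [hma, hmb']
    have h1 : A + d₂ * δ ^ 2 + d₃ * δ ^ 3 = y1 := by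
      rw [hd₂def, hd₃def]; field_simp; ring
    rw [hy1def] at h1
    linear_combination h1
  have hder2 : 2 * d₂ * (m - a) + 3 * d₃ * (m - a) ^ 2 = B' - k * (m - b) := by
    have hmb' : m - b = -δ := by linarith
    rw [hma, hmb']
    have h1 : 2 * d₂ * δ + 3 * d₃ * δ ^ 2 = m1 := by
      rw [hd₂def, hd₃def]; field_simp; ring
    rw [hm1def] at h1
    linear_combination h1
  -- value/derivative matching at b for g₁
  have hval1b : A + c₂ * (b - m) ^ 2 + c₃ * (b - m) ^ 3 = B := by
    rw [hbm, hc₂def, hc₃def]; field_simp; ring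
  have hder1b : 2 * c₂ * (b - m) + 3 * c₃ * (b - m) ^ 2 = B' := by
    rw [hbm, hc₂def, hc₃def]; field_simp; ring
  -- the stopping-condition for the right quadratic piece
  have claim : ∀ l ∈ Icc m b,
      C * (B + B' * (l - b) - (C + 1) * B' * (l - b) ^ 2) + l * (B' - k * (l - b)) ≥ ε := by
    intro l hl
    set s := b - l with hsdef
    have hs0 : 0 ≤ s := by rw [hsdef]; linarith [hl.2]
    have hs2 : 2 * s ≤ b - a := by
      rw [hsdef]
      have := hl.1
      linarith [hbm]
    have hlb : l = b - s := by rw [hsdef]; ring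
    have hlin' : ε ≤ C * B + B' * c₀ := by
      have hBc : B' / (1 + 1 / C) = B' * c₀ := by rw [hc₀def]; ring
      rw [hBc] at hlin
      linarith [hlin]
    have hid : C * (B + B' * (l - b) - (C + 1) * B' * (l - b) ^ 2) + l * (B' - k * (l - b))
        = C * B + B' * c₀ + B' * ((b - c₀) + (C + 1) * s * (2 * b - 1 - (C + 2) * s)) := by
      rw [hlb, hkdef]; ring
    have h4 : (C + 1) * (1 - b) ≤ 1 := by
      linarith [mul_le_mul_of_nonneg_left ha hCp.le, hCc₀,
        mul_lt_mul_of_pos_left hab hCp]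
    have h3 : (C + 2) * s ≤ 1 := by
      linarith [mul_le_mul_of_nonneg_left hs2 hCp.le, mul_nonneg hC.le hs0, h1C]
    have hE : 0 ≤ (b - c₀) + (C + 1) * s * (2 * b - 1 - (C + 2) * s) := by
      have t2 : 2 * b - 2 ≤ 2 * b - 1 - (C + 2) * s := by linarith
      have t3 : (C + 1) * s * (2 * b - 2) ≤ (C + 1) * s * (2 * b - 1 - (C + 2) * s) :=
        mul_le_mul_of_nonneg_left t2 (mul_nonneg hCp.le hs0)
      have t4 : (2 * s) * ((C + 1) * (1 - b)) ≤ (2 * s) * 1 :=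
        mul_le_mul_of_nonneg_left h4 (by linarith)
      have t5 : 2 * s ≤ b - c₀ := by linarith [ha, hs2]
      linarith [t3, t4, t5]
    have hBE : 0 ≤ B' * ((b - c₀) + (C + 1) * s * (2 * b - 1 - (C + 2) * s)) :=
      mul_nonneg hB' hE
    rw [ge_iff_le, hid]
    linarith
  -- assemble
  refine ⟨fun x => if x ≤ m then A else A + c₂ * (x - m) ^ 2 + c₃ * (x - m) ^ 3,
      fun x => if x ≤ m then 0 else 2 * c₂ * (x - m) + 3 * c₃ * (x - m) ^ 2,
      fun x => if x ≤ m then A + d₂ * (x - a) ^ 2 + d₃ * (x - a) ^ 3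
        else B + B' * (x - b) - (C + 1) * B' * (x - b) ^ 2,
      fun x => if x ≤ m then 2 * d₂ * (x - a) + 3 * d₃ * (x - a) ^ 2
        else B' - k * (x - b),
      ?_, ?_, ?_, ?_, ?_, ?_, ?_, ?_, ?_, ?_, ?_, ?_, ?_, ?_⟩
  · -- g₁ differentiable
    exact glue_deriv ham hmb
      (fun x _ => (hasDerivAt_const x A).hasDerivWithinAt)
      (fun x _ => hasDerivWithinAt_cubic' A 0 c₂ c₃ m _ (fun y => by ring) (by ring))
      (by ring) (by ring)
  · -- g₁' Lipschitz
    refine glue_lip ham hmb (by ring) (fun x _ y _ => ?_) (quad_lip hbc1 (by rwa [hbm]))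
    simp only [sub_self, abs_zero]
    positivity
  · -- g₂ differentiable
    exact glue_deriv ham hmb
      (fun x _ => hasDerivWithinAt_cubic' A 0 d₂ d₃ a _ (fun y => by ring) (by ring))
      (fun x _ => hasDerivWithinAt_cubic' B B' (-((C + 1) * B')) 0 b _
        (fun y => by ring) (by rw [hkdef]; ring))
      hval2 hder2
  · -- g₂' Lipschitz
    refine glue_lip ham hmb hder2 (quad_lip hbd1 (by rwa [hma])) (fun x _ y _ => ?_)
    have e : (B' - k * (x - b)) - (B' - k * (y - b)) = k * (y - x) := by ring
    rw [e, abs_mul, abs_of_nonneg hk0, abs_sub_comm y x]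
    exact mul_le_mul_of_nonneg_right hkLs (abs_nonneg _)
  · simp only [if_pos ham]
  · simp only [if_pos ham]; ring
  · simp only [if_neg (not_le.2 hmltb)]; exact hval1b
  · simp only [if_neg (not_le.2 hmltb)]; ring
  · simp only [if_pos ham]
  · simp only [if_pos ham]; ring
  · simp only [if_neg (not_le.2 hmltb)]; exact hder1b
  · simp only [if_neg (not_le.2 hmltb)]; ring
  · -- condition for g₁ on [a, m]
    intro l hl
    simp only [if_pos hl.2]
    have hεA : ε ≤ A * C := (div_le_iff₀ hC).mp hA
    rw [ge_iff_le]
    linarith [hεA]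
  · -- condition for g₂ on [m, b]
    intro l hl
    by_cases hlm : l ≤ m
    · have hl' : l = m := le_antisymm hlm hl.1
      subst hl'
      simp only [if_pos le_rfl]
      rw [hval2, hder2]
      exact claim m ⟨le_refl m, hmb⟩
    · simp only [if_neg hlm]
      exact claim l ⟨le_of_not_ge hlm, hl.2⟩
end

section
/- Fix reals p > 1 and q > 1 and let ‖x‖_p = (Σᵢ |xᵢ|^p)^{1/p} denote the p-norm on ℝ^d. Then for all x, y ∈ ℝ^d with y ≠ 0: (1/q)‖x‖_p^q − (1/q)‖y‖_p^q − ‖y‖_p^{q−p} Σᵢ (xᵢ − yᵢ)|yᵢ|^{p−2} yᵢ ≤ 2 max{ ‖x‖_p^q, ‖y‖_p^q } (where terms |yᵢ|^{p−2} yᵢ with yᵢ = 0 are interpreted as 0). Equivalently, the Bregman divergence D_ψ(x,y) of ψ(x) := (1/q)‖x‖_p^q satisfies D_ψ(x,y) ≤ 2 max{‖x‖_p^q, ‖y‖_p^q}. -/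
open scoped BigOperators

noncomputable section

/-- The `p`-norm `‖x‖_p = (Σᵢ |xᵢ|^p)^{1/p}` on `ℝ^d`. -/
def pnorm (p : ℝ) {d : ℕ} (x : EuclideanSpace ℝ (Fin d)) : ℝ :=
  (∑ i, |x i| ^ p) ^ (1 / p)

/-- The Bregman divergence of `ψ(x) = (1/q)‖x‖_p^q` satisfies
`D_ψ(x,y) ≤ 2 max{‖x‖_p^q, ‖y‖_p^q}` for `y ≠ 0`, with the gradient of `ψ`
at `y` having `i`-th coordinate `‖y‖_p^{q−p}|yᵢ|^{p−2}yᵢ`. -/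
theorem stmt_17 (p q : ℝ) (hp : 1 < p) (hq : 1 < q) {d : ℕ}
    (x y : EuclideanSpace ℝ (Fin d)) (hy : y ≠ 0) :
    1 / q * pnorm p x ^ q - 1 / q * pnorm p y ^ q -
        pnorm p y ^ (q - p) * ∑ i, (x i - y i) * (|y i| ^ (p - 2) * y i) ≤
      2 * max (pnorm p x ^ q) (pnorm p y ^ q) := by
  have hp0 : (0:ℝ) < p := by linarith
  have hp1 : p - 1 ≠ 0 := by intro h; linarith [sub_eq_zero.mp h]
  have hq0 : (0:ℝ) < q := by linarith
  set Nx := pnorm p x with hNxdef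
  set Ny := pnorm p y with hNydef
  have hNx0 : 0 ≤ Nx :=
    Real.rpow_nonneg (Finset.sum_nonneg fun i _ => Real.rpow_nonneg (abs_nonneg _) _) _
  -- positivity of ∑ |y i|^p
  have hyi : ∃ i, y i ≠ 0 := by
    by_contra h
    push_neg at h
    exact hy (WithLp.ofLp_injective 2 (funext h))
  obtain ⟨i0, hi0⟩ := hyi
  have hS : 0 < ∑ i, |y i| ^ p := by
    refine Finset.sum_pos' (fun i _ => Real.rpow_nonneg (abs_nonneg _) _) ⟨i0, Finset.mem_univ _, ?_⟩
    exact Real.rpow_pos_of_pos (abs_pos.mpr hi0) _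
  have hNy : 0 < Ny := Real.rpow_pos_of_pos hS _
  have hNyp : Ny ^ p = ∑ i, |y i| ^ p := by
    rw [hNydef, pnorm, one_div, Real.rpow_inv_rpow hS.le (ne_of_gt hp0)]
  -- per-coordinate identity for the y·∇ term
  have hterm : ∀ i, y i * (|y i| ^ (p - 2) * y i) = |y i| ^ p := by
    intro i
    rcases eq_or_ne (y i) 0 with h | h
    · simp [h, Real.zero_rpow (ne_of_gt hp0)]
    · have habs : 0 < |y i| := abs_pos.mpr h
      calc y i * (|y i| ^ (p - 2) * y i) = |y i| ^ (p - 2) * (y i * y i) := by ring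
        _ = |y i| ^ (p - 2) * (|y i| * |y i|) := by rw [abs_mul_abs_self]
        _ = |y i| ^ p := by
            rw [show p = (p - 2) + 1 + 1 by ring, Real.rpow_add habs, Real.rpow_add habs,
              Real.rpow_one]
            ring
  -- Hölder
  have hconj : Real.HolderConjugate p (p / (p - 1)) := Real.HolderConjugate.conjExponent hp
  have habsg : ∀ i, |(|y i| ^ (p - 2) * y i)| ^ (p / (p - 1)) = |y i| ^ p := by
    intro i
    rcases eq_or_ne (y i) 0 with h | h
    · rw [h]
      simp [Real.zero_rpow (ne_of_gt hp0), Real.zero_rpow (ne_of_gt hconj.symm.pos)]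
    · have habs : 0 < |y i| := abs_pos.mpr h
      have h1 : |(|y i| ^ (p - 2) * y i)| = |y i| ^ (p - 1) := by
        rw [abs_mul, abs_of_nonneg (Real.rpow_nonneg (abs_nonneg _) _),
          show p - 1 = (p - 2) + 1 by ring, Real.rpow_add habs, Real.rpow_one]
      rw [h1, ← Real.rpow_mul (abs_nonneg _)]
      congr 1
      field_simp
  have hLq : (∑ i, |(|y i| ^ (p - 2) * y i)| ^ (p / (p - 1))) ^ (1 / (p / (p - 1)))
      = Ny ^ (p - 1) := by
    have h2 : (∑ i, |(|y i| ^ (p - 2) * y i)| ^ (p / (p - 1))) = Ny ^ p := by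
      rw [hNyp]; exact Finset.sum_congr rfl fun i _ => habsg i
    rw [h2, ← Real.rpow_mul hNy.le]
    congr 1
    field_simp
  have hHolder : -(∑ i, x i * (|y i| ^ (p - 2) * y i)) ≤ Nx * Ny ^ (p - 1) := by
    have h3 := Real.inner_le_Lp_mul_Lq (Finset.univ) (fun i => -x i)
      (fun i => |y i| ^ (p - 2) * y i) hconj
    simp only [abs_neg] at h3
    rw [hLq] at h3
    calc -(∑ i, x i * (|y i| ^ (p - 2) * y i))
        = ∑ i, (-x i) * (|y i| ^ (p - 2) * y i) := by
          rw [← Finset.sum_neg_distrib]; exact Finset.sum_congr rfl fun i _ => by ring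
      _ ≤ (∑ i, |x i| ^ p) ^ (1 / p) * Ny ^ (p - 1) := h3
      _ = Nx * Ny ^ (p - 1) := by rw [hNxdef, pnorm]
  -- rewrite the sum in the goal
  have hsum : (∑ i, (x i - y i) * (|y i| ^ (p - 2) * y i))
      = (∑ i, x i * (|y i| ^ (p - 2) * y i)) - Ny ^ p := by
    rw [hNyp, ← Finset.sum_sub_distrib]
    refine Finset.sum_congr rfl fun i _ => ?_
    rw [← hterm i]; ring
  set T := ∑ i, x i * (|y i| ^ (p - 2) * y i) with hT
  rw [hsum]
  have hNyq1 : Ny ^ (q - p) * Ny ^ p = Ny ^ q := by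
    rw [← Real.rpow_add hNy]; congr 1; ring
  have hmain : Ny ^ (q - p) * (-T) ≤ Nx * Ny ^ (q - 1) := by
    calc Ny ^ (q - p) * (-T) ≤ Ny ^ (q - p) * (Nx * Ny ^ (p - 1)) := by
          exact mul_le_mul_of_nonneg_left hHolder (Real.rpow_nonneg hNy.le _)
      _ = Nx * (Ny ^ (q - p) * Ny ^ (p - 1)) := by ring
      _ = Nx * Ny ^ (q - 1) := by
          rw [← Real.rpow_add hNy]; congr 2; ring
  -- bound Nx * Ny^(q-1) by max
  set M := max (Nx ^ q) (Ny ^ q) with hM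
  have hNyqM : Ny ^ q ≤ M := le_max_right _ _
  have hNxqM : Nx ^ q ≤ M := le_max_left _ _
  have hcross : Nx * Ny ^ (q - 1) ≤ M := by
    set m := max Nx Ny with hm
    have hm0 : 0 < m := lt_of_lt_of_le hNy (le_max_right _ _)
    have h1 : Nx * Ny ^ (q - 1) ≤ m * m ^ (q - 1) := by
      refine mul_le_mul (le_max_left _ _)
        (Real.rpow_le_rpow hNy.le (le_max_right _ _) (by linarith))
        (Real.rpow_nonneg hNy.le _) hm0.le
    have h2 : m * m ^ (q - 1) = m ^ q := by
      nth_rewrite 1 [← Real.rpow_one m]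
      rw [← Real.rpow_add hm0]; congr 1; ring
    have h3 : m ^ q ≤ M := by
      rcases le_total Nx Ny with h | h
      · rw [hm, max_eq_right h]; exact hNyqM
      · rw [hm, max_eq_left h]; exact hNxqM
    linarith
  have hexp : 1 / q * Nx ^ q ≤ 1 / q * M :=
    mul_le_mul_of_nonneg_left hNxqM (by positivity)
  have hexp2 : (1 - 1 / q) * Ny ^ q ≤ (1 - 1 / q) * M := by
    have : 0 ≤ 1 - 1 / q := by
      have : 1 / q < 1 := by rw [div_lt_one hq0]; exact hq
      linarith
    exact mul_le_mul_of_nonneg_left hNyqM this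
  have hrw : 1 / q * Nx ^ q - 1 / q * Ny ^ q - Ny ^ (q - p) * (T - Ny ^ p)
      = 1 / q * Nx ^ q + (1 - 1 / q) * Ny ^ q + Ny ^ (q - p) * (-T) := by
    have : Ny ^ (q - p) * (T - Ny ^ p) = Ny ^ (q - p) * T - Ny ^ q := by
      rw [mul_sub, hNyq1]
    rw [this]; ring
  rw [hrw]
  linarith
end
end

section
/- Let ‖·‖ be an arbitrary norm on ℝ^d. Let F : ℝ^d → ℝ be differentiable, τ-star-convex with global minimizer x⋆ (F⋆ = F(x⋆)) and L-smooth with respect to ‖·‖ (i.e. |D_F(x,y)| ≤ (L/2)‖x−y‖² for all x,y), and let ψ be differentiable, convex and μ-strongly convex with respect to ‖·‖ (i.e. D_ψ(x,y) ≥ (μ/2)‖x−y‖²). Fix η_t, α_t > 0 with L α_t < 2μ, and define Ã_t := μ η_t²/(α_t(2μ − L α_t)); assume Ã_t ≥ η_t/τ. Let x_t, x_t^{ag} ∈ ℝ^d, let λ_t ∈ [0,1] and x_t^{md} := λ_t x_t^{ag} + (1−λ_t)x_t satisfy η_t⟨∇F(x_t^{md}), x_t^{md} − x_t⟩ + (Ã_t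 − η_t/τ)(F(x_t^{md}) − F(x_t^{ag})) ≤ η_t ε_t for some ε_t ≥ 0, let x_{t+1} minimize x ↦ η_t⟨∇F(x_t^{md}), x⟩ + D_ψ(x, x_t) over ℝ^d, and let x_{t+1}^{ag} minimize x ↦ α_t⟨∇F(x_t^{md}), x⟩ + (μ/2)‖x − x_t^{md}‖² over ℝ^d. Then Ã_t(F(x_{t+1}^{ag}) − F⋆) ≤ D_ψ(x⋆, x_t) − D_ψ(x⋆, x_{t+1}) + η_t ε_t + (Ã_t − η_t/τ)(F(x_t^{ag}) − F⋆). -/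
open scoped RealInnerProductSpace BigOperators

noncomputable section

lemma aux_le_zero {X C : ℝ} (hC : 0 ≤ C) (h : ∀ t : ℝ, 0 < t → X ≤ C * t) : X ≤ 0 := by
  by_contra hX
  push_neg at hX
  have hC1 : (0:ℝ) < C + 1 := by linarith
  have h2 := h (X / (C + 1)) (div_pos hX hC1)
  rw [← mul_div_assoc, le_div_iff₀ hC1] at h2
  nlinarith

lemma quad_eq {α μ A B : ℝ} (hα : 0 < α) (hμ : 0 < μ) (hB : 0 ≤ B)
    (hs : ∀ s : ℝ, α*A + μ/2*B ≤ α*(s*A) + μ/2*(s^2*B)) : α*A + μ*B = 0 := by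
  have hC : 0 ≤ μ/2*B := mul_nonneg (by linarith) hB
  have h1 : α*A + μ*B ≤ 0 := by
    apply aux_le_zero hC
    intro t ht
    have h := hs (1 - t)
    have h2 : t*(α*A + μ*B) ≤ t*(μ/2*B*t) := by nlinarith [h]
    exact le_of_mul_le_mul_left h2 ht
  have h2 : -(α*A + μ*B) ≤ 0 := by
    apply aux_le_zero hC
    intro t ht
    have h := hs (1 + t)
    have h2 : t*(-(α*A + μ*B)) ≤ t*(μ/2*B*t) := by nlinarith [h]
    exact le_of_mul_le_mul_left h2 ht
  linarith

lemma combineI {L μ α η A B G r FF : ℝ} (hL : 0 < L) (hμ : 0 < μ) (hα : 0 < α) (hη : 0 < η)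
    (hLα : L*α < 2*μ) (heq : α*A + μ*B = 0)
    (hmθ : α*A + μ/2*B ≤ α*((α/η)*G) + μ/2*((α/η)^2*r))
    (hsm : FF ≤ A + L/2*B) :
    μ*η^2/(α*(2*μ - L*α)) * FF ≤ η*G + μ/2*r := by
  have hD : 0 < 2*μ - L*α := by linarith
  have key : α*μ*(A + L/2*B) = (2*μ - L*α)*(α*A + μ/2*B) := by
    linear_combination (L*α - μ)*heq
  have h2 : η^2*(α*A + μ/2*B) ≤ α^2*(η*G + μ/2*r) := by
    have h3 := mul_le_mul_of_nonneg_left hmθ (sq_nonneg η)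
    have h4 : η^2*(α*((α/η)*G) + μ/2*((α/η)^2*r)) = α^2*(η*G + μ/2*r) := by
      field_simp
    linarith [h4.le, h4.ge]
  have h5 : μ*η^2*FF ≤ μ*η^2*(A + L/2*B) :=
    mul_le_mul_of_nonneg_left hsm (mul_nonneg hμ.le (sq_nonneg η))
  have h6 : α*(μ*η^2*(A + L/2*B)) = (2*μ - L*α)*(η^2*(α*A + μ/2*B)) := by
    linear_combination η^2*key
  have h7 : (2*μ - L*α)*(η^2*(α*A + μ/2*B)) ≤ (2*μ - L*α)*(α^2*(η*G + μ/2*r)) :=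
    mul_le_mul_of_nonneg_left h2 hD.le
  rw [div_mul_eq_mul_div, div_le_iff₀ (mul_pos hα hD)]
  have h8 : α*(μ*η^2*FF) ≤ α*((η*G + μ/2*r)*(α*(2*μ - L*α))) := by
    have h9 := mul_le_mul_of_nonneg_left h5 hα.le
    nlinarith [h9, h6, h7]
  exact le_of_mul_le_mul_left h8 hα

/-- One-step potential inequality in the smooth, strongly convex case
`q = κ = 2`, with `Ã_t = μ η_t²/(α_t(2μ − L α_t))`. -/
theorem stmt_18 {d : ℕ} (N : Vec d → ℝ) (hN : IsNorm N)
    (F ψ : Vec d → ℝ) (F' ψ' : Vec d → Vec d)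
    (hF' : ∀ x, HasGradientAt F (F' x) x)
    (hψ' : ∀ x, HasGradientAt ψ (ψ' x) x)
    (hψconv : ConvexOn ℝ Set.univ ψ)
    (τ L μ : ℝ) (hτ : 0 < τ) (hL : 0 < L) (hμ : 0 < μ)
    (xstar : Vec d) (hminF : ∀ x, F xstar ≤ F x)
    (hstar : ∀ x : Vec d, τ * ⟪F' x, x - xstar⟫ ≥ F x - F xstar)
    (hsmooth : ∀ x y : Vec d, |breg F F' x y| ≤ L / 2 * N (x - y) ^ 2)
    (hstrong : ∀ x y : Vec d, breg ψ ψ' x y ≥ μ / 2 * N (x - y) ^ 2)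
    (ηt αt At εt : ℝ) (hη : 0 < ηt) (hα : 0 < αt) (hαL : L * αt < 2 * μ)
    (hε : 0 ≤ εt)
    (hAt : At = μ * ηt ^ 2 / (αt * (2 * μ - L * αt)))
    (hAτ : At ≥ ηt / τ)
    (xt xag xmd xnext xagnext : Vec d) (lam : ℝ) (hlam : lam ∈ Set.Icc (0 : ℝ) 1)
    (hxmd : xmd = lam • xag + (1 - lam) • xt)
    (hbin : ηt * ⟪F' xmd, xmd - xt⟫ + (At - ηt / τ) * (F xmd - F xag) ≤ ηt * εt)
    (hminmd : ∀ x : Vec d,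
      ηt * ⟪F' xmd, xnext⟫ + breg ψ ψ' xnext xt ≤ ηt * ⟪F' xmd, x⟫ + breg ψ ψ' x xt)
    (hminag : ∀ x : Vec d,
      αt * ⟪F' xmd, xagnext⟫ + μ / 2 * N (xagnext - xmd) ^ 2 ≤
        αt * ⟪F' xmd, x⟫ + μ / 2 * N (x - xmd) ^ 2) :
    At * (F xagnext - F xstar) ≤
      breg ψ ψ' xstar xt - breg ψ ψ' xstar xnext + ηt * εt +
        (At - ηt / τ) * (F xag - F xstar) := by
  -- expansion of the aggressive-step minimality at points xmd + s • v
  have hexp : ∀ (s : ℝ) (v : Vec d),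
      αt*⟪F' xmd, xagnext - xmd⟫ + μ/2*(N (xagnext - xmd))^2 ≤
        αt*(s*⟪F' xmd, v⟫) + μ/2*(s^2*(N v)^2) := by
    intro s v
    have h := hminag (xmd + s • v)
    have e1 : ⟪F' xmd, xmd + s • v⟫ = ⟪F' xmd, xmd⟫ + s*⟪F' xmd, v⟫ := by
      rw [inner_add_right, real_inner_smul_right]
    have e2 : xmd + s • v - xmd = s • v := add_sub_cancel_left xmd (s • v)
    have e3 : N (xmd + s • v - xmd) ^ 2 = s^2 * (N v)^2 := by
      rw [e2, hN.smul_eq, mul_pow, sq_abs]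
    have e4 : ⟪F' xmd, xagnext - xmd⟫ = ⟪F' xmd, xagnext⟫ - ⟪F' xmd, xmd⟫ :=
      inner_sub_right _ _ _
    rw [e1, e3] at h
    rw [e4]
    linarith
  have heq : αt*⟪F' xmd, xagnext - xmd⟫ + μ*(N (xagnext - xmd))^2 = 0 :=
    quad_eq hα hμ (sq_nonneg _) (fun s => hexp s (xagnext - xmd))
  have hsm : F xagnext - F xmd ≤ ⟪F' xmd, xagnext - xmd⟫ + L/2*(N (xagnext - xmd))^2 := by
    have h := abs_le.mp (hsmooth xagnext xmd)
    simp only [breg] at h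
    linarith [h.2]
  have claimI : At*(F xagnext - F xmd) ≤
      ηt*⟪F' xmd, xnext - xt⟫ + μ/2*(N (xnext - xt))^2 := by
    rw [hAt]
    exact combineI hL hμ hα hη hαL heq (hexp (αt/ηt) (xnext - xt)) hsm
  -- first-order optimality of the mirror step
  have hkey : ∀ v : Vec d, ηt * ⟪F' xmd, v⟫ + (⟪ψ' xnext, v⟫ - ⟪ψ' xt, v⟫) = 0 := by
    have hmin : IsMinOn (fun x : Vec d => ηt * ⟪F' xmd, x⟫ + (ψ x - ⟪ψ' xt, x⟫))
        Set.univ xnext := by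
      apply isMinOn_iff.mpr
      intro x _
      have h := hminmd x
      simp only [breg] at h
      have e1 : ⟪ψ' xt, xnext - xt⟫ = ⟪ψ' xt, xnext⟫ - ⟪ψ' xt, xt⟫ := inner_sub_right _ _ _
      have e2 : ⟪ψ' xt, x - xt⟫ = ⟪ψ' xt, x⟫ - ⟪ψ' xt, xt⟫ := inner_sub_right _ _ _
      linarith
    have hloc : IsLocalMin (fun x : Vec d => ηt * ⟪F' xmd, x⟫ + (ψ x - ⟪ψ' xt, x⟫)) xnext :=
      hmin.isLocalMin Filter.univ_mem
    have h1 : HasFDerivAt (fun x : Vec d => ηt * ⟪F' xmd, x⟫)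
        (ηt • (innerSL ℝ (F' xmd))) xnext :=
      (innerSL ℝ (F' xmd)).hasFDerivAt.const_mul ηt
    have h2 : HasFDerivAt ψ ((InnerProductSpace.toDual ℝ (Vec d)) (ψ' xnext)) xnext :=
      hasGradientAt_iff_hasFDerivAt.mp (hψ' xnext)
    have h3 : HasFDerivAt (fun x : Vec d => ⟪ψ' xt, x⟫) (innerSL ℝ (ψ' xt)) xnext :=
      (innerSL ℝ (ψ' xt)).hasFDerivAt
    have hd : HasFDerivAt (fun x : Vec d => ηt * ⟪F' xmd, x⟫ + (ψ x - ⟪ψ' xt, x⟫))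
        (ηt • (innerSL ℝ (F' xmd)) +
          ((InnerProductSpace.toDual ℝ (Vec d)) (ψ' xnext) - innerSL ℝ (ψ' xt))) xnext :=
      h1.add (h2.sub h3)
    have hz := hloc.hasFDerivAt_eq_zero hd
    intro v
    have h4 := congrArg (fun T : Vec d →L[ℝ] ℝ => T v) hz
    simp only [ContinuousLinearMap.add_apply, ContinuousLinearMap.smul_apply,
      ContinuousLinearMap.sub_apply, ContinuousLinearMap.zero_apply, innerSL_apply_apply,
      InnerProductSpace.toDual_apply_apply, smul_eq_mul] at h4
    linarith
  -- three-point identity and strong convexity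
  have hmirror : ηt*⟪F' xmd, xnext - xstar⟫ ≤
      breg ψ ψ' xstar xt - breg ψ ψ' xstar xnext - μ/2*(N (xnext - xt))^2 := by
    have hv := hkey (xstar - xnext)
    have hst := hstrong xnext xt
    simp only [breg, inner_sub_right] at hv hst ⊢
    nlinarith [hv, hst]
  -- star convexity at xmd
  have hstarm : ηt/τ*(F xmd - F xstar) ≤ ηt*⟪F' xmd, xmd - xstar⟫ := by
    have h := hstar xmd
    have h2 := mul_le_mul_of_nonneg_left h (le_of_lt (div_pos hη hτ))
    have e : ηt/τ*(τ*⟪F' xmd, xmd - xstar⟫) = ηt*⟪F' xmd, xmd - xstar⟫ := by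
      field_simp
    linarith
  -- combine everything
  have i1 : ⟪F' xmd, xnext - xt⟫ = ⟪F' xmd, xnext⟫ - ⟪F' xmd, xt⟫ := inner_sub_right _ _ _
  have i2 : ⟪F' xmd, xnext - xstar⟫ = ⟪F' xmd, xnext⟫ - ⟪F' xmd, xstar⟫ := inner_sub_right _ _ _
  have i3 : ⟪F' xmd, xmd - xt⟫ = ⟪F' xmd, xmd⟫ - ⟪F' xmd, xt⟫ := inner_sub_right _ _ _
  have i4 : ⟪F' xmd, xmd - xstar⟫ = ⟪F' xmd, xmd⟫ - ⟪F' xmd, xstar⟫ := inner_sub_right _ _ _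
  rw [i1] at claimI
  rw [i2] at hmirror
  rw [i3] at hbin
  rw [i4] at hstarm
  nlinarith [claimI, hmirror, hbin, hstarm]
end
end

section
/- Let ‖·‖ be an arbitrary norm on ℝ^d and let F : ℝ^d → ℝ be differentiable and (L,κ)-weakly smooth with respect to ‖·‖, with 1 < κ < q and q ≥ 2. Set q* := q/(q−1), r := (q−κ)/κ and M := (r/q)^r. Fix μ, α > 0 and x^{md} ∈ ℝ^d, and let x⁺ minimize x ↦ α⟨∇F(x^{md}), x⟩ + (μ/q)‖x − x^{md}‖^q over ℝ^d. Then α(F(x^{md}) − F(x⁺)) ≥ (μ/q*)‖x^{md} − x⁺‖^q − (M^{1/r}/μ^{1/r}) (Lα)^{(r+1)/r}. -/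
open scoped RealInnerProductSpace BigOperators

noncomputable section

lemma young_max {A B p p' : ℝ} (hA : 0 < A) (hB : 0 < B) (hp : Real.HolderConjugate p p')
    (x : ℝ) (hx : 0 ≤ x) :
    A * x ≤ B * x ^ p + (A / (p * B) ^ (1/p)) ^ p' / p' := by
  have hp0 : 0 < p := hp.pos
  have hpB : 0 < p * B := mul_pos hp0 hB
  have hK : 0 < (p * B) ^ (1/p : ℝ) := Real.rpow_pos_of_pos hpB _
  have key := Real.young_inequality_of_nonneg
    (mul_nonneg hK.le hx) (div_nonneg hA.le hK.le) hp
  have h1 : (p*B)^(1/p : ℝ) * x * (A / (p*B)^(1/p : ℝ)) = A * x := by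
    field_simp
  have h2 : ((p*B)^(1/p : ℝ) * x) ^ p / p = B * x ^ p := by
    rw [Real.mul_rpow hK.le hx, ← Real.rpow_mul hpB.le, one_div,
      inv_mul_cancel₀ hp0.ne', Real.rpow_one]
    field_simp
  rw [h1, h2] at key
  exact key

lemma const_eq {L' μ q κ : ℝ} (hL : 0 < L') (hμ : 0 < μ) (hκ : 0 < κ) (hκq : κ < q) :
    (L'/κ / (μ/κ) ^ (κ/q)) ^ (q/(q-κ)) / (q/(q-κ))
      = (q-κ)/(κ*q) / μ ^ (κ/(q-κ)) * L' ^ (q/(q-κ)) := by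
  have hq : 0 < q := lt_trans hκ hκq
  have hqκ : 0 < q - κ := by linarith
  have hLκ : (0:ℝ) < L'/κ := by positivity
  have hμκ : (0:ℝ) < μ/κ := by positivity
  have hμκp : (0:ℝ) < (μ/κ) ^ (κ/q) := by positivity
  have hX : (0:ℝ) < L'/κ / (μ/κ) ^ (κ/q) := by positivity
  have hXe : (0:ℝ) < (L'/κ / (μ/κ) ^ (κ/q)) ^ (q/(q-κ)) := by positivity
  have he : (0:ℝ) < q/(q-κ) := by positivity
  have hc1 : (0:ℝ) < (q-κ)/(κ*q) := by positivity
  have hμr : (0:ℝ) < μ ^ (κ/(q-κ)) := by positivity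
  have hc2 : (0:ℝ) < (q-κ)/(κ*q) / μ ^ (κ/(q-κ)) := by positivity
  have hLe : (0:ℝ) < L' ^ (q/(q-κ)) := by positivity
  have h1 : (0:ℝ) < (L'/κ / (μ/κ) ^ (κ/q)) ^ (q/(q-κ)) / (q/(q-κ)) := by positivity
  have h2 : (0:ℝ) < (q-κ)/(κ*q) / μ ^ (κ/(q-κ)) * L' ^ (q/(q-κ)) := by positivity
  apply Real.log_injOn_pos (Set.mem_Ioi.2 h1) (Set.mem_Ioi.2 h2)
  have hκq0 : (0:ℝ) < κ*q := by positivity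
  rw [Real.log_div hXe.ne' he.ne', Real.log_rpow hX, Real.log_div hLκ.ne' hμκp.ne',
    Real.log_rpow hμκ, Real.log_mul hc2.ne' hLe.ne', Real.log_div hc1.ne' hμr.ne',
    Real.log_rpow hμ, Real.log_rpow hL, Real.log_div hL.ne' hκ.ne',
    Real.log_div hμ.ne' hκ.ne', Real.log_div hq.ne' hqκ.ne',
    Real.log_div hqκ.ne' hκq0.ne',
    Real.log_mul hκ.ne' hq.ne']
  field_simp
  ring


/-- Progress of the proximal step for an (L,κ)-weakly smooth function:
`α(F(x^{md}) − F(x⁺)) ≥ (μ/q*)‖x^{md} − x⁺‖^q − (M^{1/r}/μ^{1/r})(Lα)^{(r+1)/r}`. -/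
theorem stmt_19 {d : ℕ} (N : Vec d → ℝ) (hN : IsNorm N)
    (F : Vec d → ℝ) (F' : Vec d → Vec d)
    (hF' : ∀ x, HasGradientAt F (F' x) x)
    (L κ q : ℝ) (hL : 0 < L) (hκ1 : 1 < κ) (hκq : κ < q) (hq : 2 ≤ q)
    (hweak : ∀ x y : Vec d, |breg F F' x y| ≤ L / κ * N (x - y) ^ κ)
    (qstar r M : ℝ) (hqs : qstar = q / (q - 1)) (hr : r = (q - κ) / κ)
    (hM : M = (r / q) ^ r)
    (μ α : ℝ) (hμ : 0 < μ) (hα : 0 < α)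
    (xmd xp : Vec d)
    (hmin : ∀ x : Vec d,
      α * ⟪F' xmd, xp⟫ + μ / q * N (xp - xmd) ^ q ≤
        α * ⟪F' xmd, x⟫ + μ / q * N (x - xmd) ^ q) :
    α * (F xmd - F xp) ≥
      μ / qstar * N (xmd - xp) ^ q -
        M ^ (1 / r) / μ ^ (1 / r) * (L * α) ^ ((r + 1) / r) := by
  have hκ0 : (0:ℝ) < κ := lt_trans one_pos hκ1
  have hq0 : (0:ℝ) < q := lt_trans hκ0 hκq
  have hqκ : (0:ℝ) < q - κ := by linarith
  -- basic norm facts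
  have hN0 : N 0 = 0 := (hN.eq_zero_iff 0).2 rfl
  have hNneg : ∀ x, N (-x) = N x := by
    intro x
    have h := hN.smul_eq (-1) x
    simpa using h
  have hNnonneg : ∀ x, 0 ≤ N x := by
    intro x
    have h := hN.add_le x (-x)
    rw [add_neg_cancel, hN0, hNneg] at h
    linarith
  set t : ℝ := N (xp - xmd) with ht
  have ht0 : 0 ≤ t := hNnonneg _
  set s : ℝ := ⟪F' xmd, xp - xmd⟫ with hs
  -- step inequality for λ ∈ (0,1)
  have hstep : ∀ l : ℝ, 0 < l → l < 1 →
      α * s ≤ -(μ/q) * ((1 - l ^ q)/(1 - l)) * t ^ q := by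
    intro l hl0 hl1
    have h1l : (0:ℝ) < 1 - l := by linarith
    have h := hmin (xmd + l • (xp - xmd))
    have hx1 : ⟪F' xmd, xmd + l • (xp - xmd)⟫ = ⟪F' xmd, xmd⟫ + l * s := by
      rw [inner_add_right, real_inner_smul_right]
    have hx2 : N (xmd + l • (xp - xmd) - xmd) = l * t := by
      have e : xmd + l • (xp - xmd) - xmd = l • (xp - xmd) := by abel
      rw [e, hN.smul_eq, abs_of_pos hl0]
    have hx3 : ⟪F' xmd, xp⟫ = ⟪F' xmd, xmd⟫ + s := by
      rw [hs, inner_sub_right]; ring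
    rw [hx1, hx2, hx3] at h
    have hlq : (l * t) ^ q = l ^ q * t ^ q := Real.mul_rpow hl0.le ht0
    rw [hlq] at h
    have e2 : -(μ/q) * ((1 - l ^ q)/(1 - l)) * t ^ q
        = (-(μ/q) * (1 - l ^ q) * t ^ q) / (1 - l) := by ring
    rw [e2, le_div_iff₀ h1l]
    nlinarith [h]
  -- limit λ → 1⁻
  have hkey : α * s ≤ -μ * t ^ q := by
    have hd : HasDerivAt (fun x : ℝ => x ^ q) (q * (1:ℝ) ^ (q - 1)) 1 :=
      Real.hasDerivAt_rpow_const (Or.inl one_ne_zero)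
    have hslope : Filter.Tendsto (slope (fun x : ℝ => x ^ q) 1) (nhdsWithin 1 {(1:ℝ)}ᶜ)
        (nhds (q * (1:ℝ) ^ (q - 1))) := hasDerivAt_iff_tendsto_slope.1 hd
    have hslope2 : Filter.Tendsto
        (fun l : ℝ => -(μ/q) * slope (fun x : ℝ => x ^ q) 1 l * t ^ q)
        (nhdsWithin 1 (Set.Iio (1:ℝ))) (nhds (-μ * t ^ q)) := by
      have h2 := (hslope.const_mul (-(μ/q))).mul_const (t ^ q)
      have e : -(μ/q) * (q * (1:ℝ) ^ (q - 1)) * t ^ q = -μ * t ^ q := by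
        rw [Real.one_rpow]
        field_simp
      rw [e] at h2
      exact h2.mono_left (nhdsWithin_mono 1 (fun x hx => ne_of_lt hx))
    refine ge_of_tendsto hslope2 ?_
    filter_upwards [Ioo_mem_nhdsLT_of_mem (Set.mem_Ioc.2 ⟨zero_lt_one, le_refl 1⟩)] with l hl
    have h := hstep l hl.1 hl.2
    have e0 : (1 - l ^ q)/(1 - l) = (l ^ q - 1)/(l - 1) := by
      rw [← neg_sub (l ^ q) 1, ← neg_sub l 1, neg_div_neg_eq]
    have e : slope (fun x : ℝ => x ^ q) 1 l = (1 - l ^ q)/(1 - l) := by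
      rw [e0, slope_def_field, Real.one_rpow]
    rw [e]
    exact h
  -- weak smoothness bound
  have hb := (abs_le.1 (hweak xp xmd)).2
  simp only [breg] at hb
  rw [← hs, ← ht] at hb
  -- Young's inequality step
  have hconj : Real.HolderConjugate (q/κ) (q/(q-κ)) := by
    constructor
    · rw [inv_div, inv_div, inv_one, ← add_div, add_sub_cancel, div_self hq0.ne']
    · positivity
    · positivity
  have hyoung := young_max (A := L*α/κ) (B := μ/q) (by positivity) (by positivity)
    hconj (t ^ κ) (Real.rpow_nonneg ht0 κ)
  have htκq : (t ^ κ) ^ (q/κ) = t ^ q := by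
    rw [← Real.rpow_mul ht0]
    congr 1
    field_simp
  have hpB : (q/κ) * (μ/q) = μ/κ := by
    field_simp
  have h1p : 1/(q/κ) = κ/q := one_div_div q κ
  rw [htκq, hpB, h1p, const_eq (by positivity) hμ hκ0 hκq] at hyoung
  -- rewrite the goal constant
  have hr0 : 0 < r := by rw [hr]; positivity
  have h1r : 1/r = κ/(q-κ) := by rw [hr]; exact one_div_div _ _
  have hr1r : (r+1)/r = q/(q-κ) := by
    rw [hr]
    field_simp
    ring
  have hM1r : M ^ (1/r) = r/q := by
    rw [hM, ← Real.rpow_mul (by positivity), mul_one_div, div_self hr0.ne', Real.rpow_one]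
  have hrq : r/q = (q-κ)/(κ*q) := by rw [hr, div_div]
  have hgoalC : M ^ (1/r) / μ ^ (1/r) * (L*α) ^ ((r+1)/r)
      = (q-κ)/(κ*q) / μ ^ (κ/(q-κ)) * (L*α) ^ (q/(q-κ)) := by
    rw [hM1r, hrq, h1r, hr1r]
  have hNsym : N (xmd - xp) = t := by
    rw [← neg_sub xp xmd, hNneg]
  have hq1 : q - 1 ≠ 0 := by
    intro h0
    linarith
  have hqstar : μ / qstar * t ^ q = μ * t ^ q - μ/q * t ^ q := by
    rw [hqs]
    field_simp
  rw [hNsym, hgoalC, hqstar]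
  have hbα := mul_le_mul_of_nonneg_left hb hα.le
  have h2 : α * (L / κ * t ^ κ) = L * α / κ * t ^ κ := by ring
  rw [h2] at hbα
  linarith [hkey, hyoung, hbα]
end
end
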